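/- arXiv:0802.2693 — 4 statements merged into one kernel-verified Lean document; each statement's English description precedes it below -/
import Mathlib

section
/- If f ∈ D and g = L(f) is the Lamperti transform of f, then 0 and ∞ are absorbing for g as well; that is, g ∈ D. -/
open Filter Set Topology MeasureTheory
open scoped ENNReal

noncomputable section

/-- The state space `E = [0,∞]`. -/
abbrev E : Type := ℝ≥0∞

/-- A fixed metric on `E = [0,∞]` making it homeomorphic to `[0,1]`
(via the order isomorphism `x ↦ x/(x+1)`). -/
def rhoE (x y : E) : ℝ :=
  dist (ENNReal.orderIsoUnitIntervalBirational x) (ENNReal.orderIsoUnitIntervalBirational y)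

/-- A function `f : [0,∞) → E` (extended to `ℝ` by constancy on `(-∞,0]`) is càdlàg:
right-continuous with left limits. -/
def Cadlag (f : ℝ → E) : Prop :=
  (∀ t : ℝ, ContinuousWithinAt f (Ici t) t) ∧
  (∀ t : ℝ, ∃ l : E, Tendsto f (nhdsWithin t (Iio t)) (nhds l))

/-- The Skorohod-type space `D` of càdlàg paths with values in `E = [0,∞]`, absorbed at `0`
and at `∞`, and converging at infinity to a limit `f(∞-) = f(∞) ∈ {0,∞}`. -/
def MemD (f : ℝ → E) : Prop :=
  Cadlag f ∧ (∀ t : ℝ, t < 0 → f t = f 0) ∧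
  (Tendsto f atTop (nhds 0) ∨ Tendsto f atTop (nhds ⊤)) ∧
  (∀ t s : ℝ, 0 ≤ s → f t = 0 → f (t + s) = 0) ∧
  (∀ t s : ℝ, 0 ≤ s → f t = ⊤ → f (t + s) = ⊤)

/-- The space `D` as a set of paths. -/
def D : Set (ℝ → E) := {f | MemD f}

/-- The value `f(∞) = f(∞-)` of a path in `D`. -/
def limD (f : ℝ → E) : E := limUnder atTop f

/-- The additive functional `θ_t = ∫_0^t f(s) ds ∈ [0,∞]`. -/
def theta (f : ℝ → E) (t : ℝ) : ℝ≥0∞ := ∫⁻ s in Ioc (0 : ℝ) t, f s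

/-- The right-inverse `κ_t = inf{u ≥ 0 : θ_u > t} ∈ [0,∞]` of `θ` (with `inf ∅ = ∞`). -/
def kappa (f : ℝ → E) (t : ℝ) : ℝ≥0∞ :=
  sInf {x : ℝ≥0∞ | ∃ u : ℝ, 0 ≤ u ∧ x = ENNReal.ofReal u ∧ ENNReal.ofReal t < theta f u}

/-- The Lamperti transformation `L(f) = f ∘ κ`, with `L(f)(t) = f(∞)` when `κ_t = ∞`. -/
def LampertiT (f : ℝ → E) (t : ℝ) : E :=
  if kappa f t = ⊤ then limD f else f (kappa f t).toReal

/-- The additive functional `κ_t = ∫_0^t 1/g(s) ds` used by the inverse transformation. -/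
def kappaInv (g : ℝ → E) (t : ℝ) : ℝ≥0∞ := ∫⁻ s in Ioc (0 : ℝ) t, (g s)⁻¹

/-- The right-inverse `θ` of `t ↦ ∫_0^t 1/g(s) ds`. -/
def thetaInv (g : ℝ → E) (t : ℝ) : ℝ≥0∞ :=
  sInf {x : ℝ≥0∞ | ∃ u : ℝ, 0 ≤ u ∧ x = ENNReal.ofReal u ∧ ENNReal.ofReal t < kappaInv g u}

/-- The inverse Lamperti transformation `L⁻¹(g) = g ∘ θ`, where `θ` is the right-inverse of
`t ↦ ∫_0^t 1/g(s) ds`, with the value `g(∞)` when `θ_t = ∞`. -/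
def LampertiInv (g : ℝ → E) (t : ℝ) : E :=
  if thetaInv g t = ⊤ then limD g else g (thetaInv g t).toReal

section LampertiAux

lemma measurable_comp_countable_range {g : ℝ → ℝ} (hg : Measurable g)
    (hc : (Set.range g).Countable) (f : ℝ → E) : Measurable (f ∘ g) := by
  intro B _
  have h : (f ∘ g) ⁻¹' B = g ⁻¹' (f ⁻¹' B ∩ Set.range g) := by
    ext x
    simp [Set.mem_preimage, Set.mem_range_self]
  rw [h]
  exact hg ((hc.mono inter_subset_right).measurableSet)

lemma measurable_of_rightCont {f : ℝ → E} (hrc : ∀ t : ℝ, ContinuousWithinAt f (Ici t) t) :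
    Measurable f := by
  have key : ∀ n : ℕ, Measurable (fun t : ℝ => f ((⌊t * (n+1)⌋ + 1) / (n+1))) := by
    intro n
    have hg : Measurable (fun t : ℝ => ((⌊t * ((n:ℝ)+1)⌋ : ℝ) + 1) / ((n:ℝ)+1)) := by
      apply Measurable.div_const
      apply Measurable.add_const
      exact measurable_from_top.comp ((measurable_id.mul_const _).floor)
    have hcnt : (Set.range (fun t : ℝ => ((⌊t * ((n:ℝ)+1)⌋ : ℝ) + 1) / ((n:ℝ)+1))).Countable := by
      apply Set.Countable.mono _ (Set.countable_range (fun k : ℤ => ((k:ℝ)+1)/((n:ℝ)+1)))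
      rintro x ⟨t, rfl⟩
      exact ⟨⌊t * ((n:ℝ)+1)⌋, rfl⟩
    exact measurable_comp_countable_range hg hcnt f
  apply ENNReal.measurable_of_tendsto key
  rw [tendsto_pi_nhds]
  intro t
  have lb : ∀ n : ℕ, t ≤ ((⌊t * ((n:ℝ)+1)⌋ : ℝ) + 1) / ((n:ℝ)+1) := by
    intro n
    rw [le_div_iff₀ (by positivity)]
    have := Int.lt_floor_add_one (t * ((n:ℝ)+1))
    linarith
  have ub : ∀ n : ℕ, ((⌊t * ((n:ℝ)+1)⌋ : ℝ) + 1) / ((n:ℝ)+1) ≤ t + 1/((n:ℝ)+1) := by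
    intro n
    rw [div_le_iff₀ (by positivity)]
    have := Int.floor_le (t * ((n:ℝ)+1))
    have hn : (0:ℝ) < (n:ℝ)+1 := by positivity
    field_simp
    nlinarith
  apply (hrc t).tendsto.comp
  rw [tendsto_nhdsWithin_iff]
  constructor
  · have h2 : Tendsto (fun n : ℕ => t + 1/((n:ℝ)+1)) atTop (𝓝 t) := by
      have := tendsto_one_div_add_atTop_nhds_zero_nat (𝕜 := ℝ)
      have h3 := tendsto_const_nhds (x := t) (f := atTop (α := ℕ)) |>.add this
      simpa using h3
    exact tendsto_of_tendsto_of_tendsto_of_le_of_le tendsto_const_nhds h2 lb ub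
  · exact Eventually.of_forall fun n => lb n



variable {f : ℝ → E}

lemma theta_mono : Monotone (theta f) :=
  fun _ _ hab => lintegral_mono_set (Ioc_subset_Ioc_right hab)

lemma theta_nonpos {t : ℝ} (ht : t ≤ 0) : theta f t = 0 := by
  rw [theta, Ioc_eq_empty (not_lt.2 ht)]
  simp

lemma theta_add {a b : ℝ} (ha : 0 ≤ a) (hab : a ≤ b) :
    theta f b = theta f a + ∫⁻ s in Ioc a b, f s := by
  rw [theta, theta, ← lintegral_union measurableSet_Ioc (Ioc_disjoint_Ioc_of_le le_rfl),
    Ioc_union_Ioc_eq_Ioc ha hab]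

lemma exists_lt_theta (hmeas : Measurable f) {r : ℝ} (hr : 0 < r) {c : ℝ≥0∞}
    (hc : c < theta f r) : ∃ u, 0 ≤ u ∧ u < r ∧ c < theta f u := by
  set u : ℕ → ℝ := fun n => r - r/(n+1) with hu
  have hu0 : ∀ n, 0 ≤ u n := by
    intro n
    have : r/((n:ℝ)+1) ≤ r := by
      rw [div_le_iff₀ (by positivity)]
      nlinarith
    simp only [hu, sub_nonneg]
    exact this
  have hur : ∀ n, u n < r := by
    intro n
    have : 0 < r/((n:ℝ)+1) := by positivity
    simp only [hu]
    linarith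
  have hth : theta f r = ⨆ n, theta f (u n) := by
    have e1 : theta f r = ∫⁻ x in Ioo (0:ℝ) r, f x := by
      rw [theta]
      exact (setLIntegral_congr Ioo_ae_eq_Ioc).symm
    have e2 : ∀ n, theta f (u n) = ∫⁻ x, (Ioc (0:ℝ) (u n)).indicator f x := by
      intro n
      rw [theta, lintegral_indicator measurableSet_Ioc]
    have e3 : ∫⁻ x in Ioo (0:ℝ) r, f x = ∫⁻ x, (Ioo (0:ℝ) r).indicator f x := by
      rw [lintegral_indicator measurableSet_Ioo]
    rw [e1, e3]
    have e4 : ∀ x, (Ioo (0:ℝ) r).indicator f x = ⨆ n, (Ioc (0:ℝ) (u n)).indicator f x := by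
      intro x
      by_cases hx : x ∈ Ioo (0:ℝ) r
      · rw [indicator_of_mem hx]
        obtain ⟨n, hn⟩ : ∃ n : ℕ, x ≤ u n := by
          obtain ⟨n, hn⟩ := exists_nat_gt (r / (r - x))
          refine ⟨n, ?_⟩
          have hrx : 0 < r - x := by linarith [hx.2]
          have h1 : r / (r - x) < (n:ℝ) + 1 := by linarith
          have h2 : r / ((n:ℝ)+1) < r - x := by
            rw [div_lt_iff₀ (by positivity)]
            calc r = (r / (r-x)) * (r - x) := by field_simp
            _ < ((n:ℝ)+1) * (r-x) := by nlinarith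
            _ = (r-x) * ((n:ℝ)+1) := by ring
          simp only [hu]
          linarith
        apply le_antisymm
        · exact le_iSup_of_le n (Set.indicator_of_mem (Set.mem_Ioc.mpr ⟨hx.1, hn⟩) f).ge
        · exact iSup_le fun n => Set.indicator_le_self (Ioc (0:ℝ) (u n)) f x
      · rw [indicator_of_notMem hx]
        symm
        rw [ENNReal.iSup_eq_zero]
        intro n
        rw [indicator_of_notMem]
        intro hx'
        exact hx ⟨hx'.1, lt_of_le_of_lt hx'.2 (hur n)⟩
    calc ∫⁻ x, (Ioo (0:ℝ) r).indicator f x = ∫⁻ x, ⨆ n, (Ioc (0:ℝ) (u n)).indicator f x := by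
          congr 1; funext x; exact e4 x
    _ = ⨆ n, ∫⁻ x, (Ioc (0:ℝ) (u n)).indicator f x := by
          apply lintegral_iSup
          · exact fun n => hmeas.indicator measurableSet_Ioc
          · intro m n hmn x
            have hsub : Ioc (0:ℝ) (u m) ⊆ Ioc (0:ℝ) (u n) := by
              apply Ioc_subset_Ioc_right
              simp only [hu, sub_le_sub_iff_left]
              have hcast : ((m:ℝ)+1) ≤ (n:ℝ)+1 := by
                have := (Nat.cast_le (α := ℝ)).2 hmn
                linarith
              exact div_le_div_of_nonneg_left (le_of_lt hr) (by positivity) hcast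
            exact Set.indicator_le_indicator_of_subset hsub (fun _ => zero_le) x
    _ = ⨆ n, theta f (u n) := by simp_rw [e2]
  rw [hth] at hc
  obtain ⟨n, hn⟩ := lt_iSup_iff.1 hc
  exact ⟨u n, hu0 n, hur n, hn⟩

lemma kappa_mono : Monotone (kappa f) := by
  intro a b hab
  apply sInf_le_sInf
  rintro x ⟨u, hu0, rfl, hu⟩
  exact ⟨u, hu0, rfl, lt_of_le_of_lt (ENNReal.ofReal_le_ofReal hab) hu⟩

lemma kappa_le {t u : ℝ} (hu : 0 ≤ u) (h : ENNReal.ofReal t < theta f u) :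
    kappa f t ≤ ENNReal.ofReal u :=
  sInf_le ⟨u, hu, rfl, h⟩

lemma theta_le_of_lt_kappa {t u : ℝ} (hu : 0 ≤ u) (h : ENNReal.ofReal u < kappa f t) :
    theta f u ≤ ENNReal.ofReal t := by
  by_contra h'
  push_neg at h'
  exact absurd (kappa_le hu h') (not_le.2 h)

lemma exists_of_kappa_ne_top {t : ℝ} (h : kappa f t ≠ ⊤) :
    ∃ u, 0 ≤ u ∧ ENNReal.ofReal t < theta f u := by
  by_contra h'
  push_neg at h'
  apply h
  have he : {x : ℝ≥0∞ | ∃ u : ℝ, 0 ≤ u ∧ x = ENNReal.ofReal u ∧ ENNReal.ofReal t < theta f u}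
      = ∅ := by
    apply eq_empty_iff_forall_notMem.2
    rintro x ⟨u, hu0, rfl, hu⟩
    exact absurd hu (not_lt.2 (h' u hu0))
  rw [kappa, he, sInf_empty]

lemma kappa_inf_image (t : ℝ) : sInf (kappa f '' Ioi t) = kappa f t := by
  apply le_antisymm
  · apply le_sInf
    rintro x ⟨u, hu0, rfl, hθ⟩
    obtain ⟨s, hst, hs⟩ : ∃ s, t < s ∧ ENNReal.ofReal s < theta f u := by
      rcases eq_or_ne (theta f u) ⊤ with h | h
      · exact ⟨t + 1, by linarith, h ▸ ENNReal.ofReal_lt_top⟩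
      · have hmax : ENNReal.ofReal (max t 0) < theta f u := by
          rcases le_total t 0 with h' | h'
          · rw [max_eq_right h', ENNReal.ofReal_zero]
            exact lt_of_le_of_lt zero_le hθ
          · rwa [max_eq_left h']
        have h1 : max t 0 < (theta f u).toReal :=
          (ENNReal.ofReal_lt_iff_lt_toReal (le_max_right t 0) h).1 hmax
        refine ⟨(max t 0 + (theta f u).toReal) / 2, ?_, ?_⟩
        · have := le_max_left t 0
          linarith
        · rw [ENNReal.ofReal_lt_iff_lt_toReal (by positivity) h]
          linarith [le_max_right t 0]
    calc sInf (kappa f '' Ioi t) ≤ kappa f s := sInf_le ⟨s, hst, rfl⟩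
    _ ≤ ENNReal.ofReal u := kappa_le hu0 hs
  · apply le_sInf
    rintro x ⟨s, hs, rfl⟩
    exact kappa_mono (le_of_lt hs)

lemma kappa_tendsto_right (t : ℝ) : Tendsto (kappa f) (𝓝[>] t) (𝓝 (kappa f t)) :=
  kappa_inf_image t ▸ kappa_mono.tendsto_nhdsGT t

lemma kappa_tendsto_Ici (t : ℝ) : Tendsto (kappa f) (𝓝[Ici t] t) (𝓝 (kappa f t)) := by
  rw [← Ioi_insert, nhdsWithin_insert]
  exact tendsto_sup.2 ⟨tendsto_pure_nhds (kappa f) t, kappa_tendsto_right t⟩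

lemma eq_top_of_forall_ofReal_lt {a : ℝ≥0∞} (h : ∀ t : ℝ, ENNReal.ofReal t < a) : a = ⊤ := by
  by_contra h'
  have h1 := h (a.toReal + 1)
  have h2 : a ≤ ENNReal.ofReal (a.toReal + 1) :=
    calc a = ENNReal.ofReal a.toReal := (ENNReal.ofReal_toReal h').symm
    _ ≤ ENNReal.ofReal (a.toReal + 1) := ENNReal.ofReal_le_ofReal (by linarith)
  exact absurd h1 (not_lt.2 h2)


lemma ne_zero_of_kappa_ne_top (hf : MemD f) {t : ℝ} (h : kappa f t ≠ ⊤) :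
    f (kappa f t).toReal ≠ 0 := by
  have hmeas : Measurable f := measurable_of_rightCont hf.1.1
  set r := (kappa f t).toReal with hrdef
  have hr0 : 0 ≤ r := ENNReal.toReal_nonneg
  intro h0
  have habs : ∀ u, r ≤ u → f u = 0 := by
    intro u hu
    have := hf.2.2.2.1 r (u - r) (by linarith) h0
    simpa using this
  obtain ⟨u0, hu00, hu0⟩ := exists_of_kappa_ne_top h
  have hθr : ENNReal.ofReal t < theta f r := by
    rcases le_total u0 r with h' | h'
    · exact lt_of_lt_of_le hu0 (theta_mono h')
    · have he : theta f u0 = theta f r := by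
        rw [theta_add hr0 h']
        have hz : ∫⁻ s in Ioc r u0, f s = 0 := by
          rw [setLIntegral_congr_fun measurableSet_Ioc
            (fun x hx => habs x (le_of_lt hx.1))]
          simp
        rw [hz, add_zero]
      exact he ▸ hu0
  rcases eq_or_lt_of_le hr0 with h' | h'
  · rw [← h', theta_nonpos le_rfl] at hθr
    simp at hθr
  · obtain ⟨u, hu0', hur, hu⟩ := exists_lt_theta hmeas h' hθr
    have h1 : kappa f t ≤ ENNReal.ofReal u := kappa_le hu0' hu
    have h2 : ENNReal.ofReal u < kappa f t := by
      calc ENNReal.ofReal u < ENNReal.ofReal r := (ENNReal.ofReal_lt_ofReal_iff h').2 hur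
      _ = kappa f t := ENNReal.ofReal_toReal h
    exact absurd h1 (not_le.2 h2)

lemma kappa_eq_of_top (hf : MemD f) {t s : ℝ} (h : kappa f t ≠ ⊤)
    (hfr : f (kappa f t).toReal = ⊤) (hts : t ≤ s) : kappa f s = kappa f t := by
  set r := (kappa f t).toReal with hrdef
  have hr0 : 0 ≤ r := ENNReal.toReal_nonneg
  have habs : ∀ u, r ≤ u → f u = ⊤ := by
    intro u hu
    have := hf.2.2.2.2 r (u - r) (by linarith) hfr
    simpa using this
  refine le_antisymm ?_ (kappa_mono hts)
  apply ENNReal.le_of_forall_pos_le_add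
  intro ε hε _
  have hθ : theta f (r + ε) = ⊤ := by
    have h1 : ∫⁻ x in Ioc r (r + ε), f x = ⊤ := by
      rw [setLIntegral_congr_fun measurableSet_Ioc
        (fun x hx => habs x (le_of_lt hx.1))]
      rw [setLIntegral_const, Real.volume_Ioc]
      have hne : ENNReal.ofReal (r + ε - r) ≠ 0 := by
        rw [ne_eq, ENNReal.ofReal_eq_zero, not_le]
        simpa using hε
      rw [ENNReal.top_mul hne]
    rw [theta_add hr0 (le_add_of_nonneg_right ε.coe_nonneg), h1, add_top]
  have h2 : kappa f s ≤ ENNReal.ofReal (r + ε) := by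
    apply kappa_le (by linarith [ε.coe_nonneg])
    rw [hθ]
    exact ENNReal.ofReal_lt_top
  calc kappa f s ≤ ENNReal.ofReal (r + ε) := h2
  _ ≤ ENNReal.ofReal r + ENNReal.ofReal ε := ENNReal.ofReal_add_le
  _ = kappa f t + ε := by rw [ENNReal.ofReal_toReal h, ENNReal.ofReal_coe_nnreal]


end LampertiAux

/-- **The Lamperti transform of a path in `D` is again in `D`**; in particular `0` and `∞`
are absorbing for `L(f)` as well. -/
theorem lamperti_mem_D (f : ℝ → E) (hf : MemD f) : MemD (LampertiT f) := by
  have hmeas : Measurable f := measurable_of_rightCont hf.1.1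
  have hg_def : ∀ s : ℝ, kappa f s ≠ ⊤ → LampertiT f s = f (kappa f s).toReal :=
    fun s h => if_neg h
  have hg_top : ∀ s : ℝ, kappa f s = ⊤ → LampertiT f s = limD f := fun s h => if_pos h
  have hlim : Tendsto f atTop (𝓝 (limD f)) := by
    rcases hf.2.2.1 with h | h
    · rw [limD, h.limUnder_eq]; exact h
    · rw [limD, h.limUnder_eq]; exact h
  have hlim01 : limD f = 0 ∨ limD f = ⊤ := by
    rcases hf.2.2.1 with h | h
    · exact Or.inl (by rw [limD, h.limUnder_eq])
    · exact Or.inr (by rw [limD, h.limUnder_eq])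
  refine ⟨⟨?_, ?_⟩, ?_, ?_, ?_, ?_⟩
  · -- right continuity
    intro t
    rcases eq_or_ne (kappa f t) ⊤ with h | h
    · have hconst : ∀ s ∈ Ici t, LampertiT f s = LampertiT f t := by
        intro s hs
        rw [hg_top s (top_le_iff.1 (h ▸ kappa_mono hs)), hg_top t h]
      exact (continuousWithinAt_const (b := LampertiT f t)).congr hconst
        (hconst t self_mem_Ici)
    · set r := (kappa f t).toReal with hrdef
      have hκ : Tendsto (kappa f) (𝓝[Ici t] t) (𝓝 (kappa f t)) := kappa_tendsto_Ici t
      have hev : ∀ᶠ s in 𝓝[Ici t] t, kappa f s < ⊤ :=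
        hκ.eventually_lt_const (lt_top_iff_ne_top.2 h)
      have h2 : Tendsto (fun s => (kappa f s).toReal) (𝓝[Ici t] t) (𝓝[Ici r] r) := by
        rw [tendsto_nhdsWithin_iff]
        constructor
        · exact (ENNReal.tendsto_toReal h).comp hκ
        · filter_upwards [hev, eventually_mem_nhdsWithin] with s h1 h2
          exact (ENNReal.toReal_le_toReal h h1.ne).2 (kappa_mono h2)
      have h3 := (hf.1.1 r).tendsto.comp h2
      have hcongr : (fun s => f (kappa f s).toReal) =ᶠ[𝓝[Ici t] t] LampertiT f :=
        hev.mono fun s hs => (hg_def s hs.ne).symm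
      have h4 : Tendsto (LampertiT f) (𝓝[Ici t] t) (𝓝 (f r)) := h3.congr' hcongr
      rw [ContinuousWithinAt, hg_def t h]
      exact h4
  · -- left limits
    intro t
    set M := sSup (kappa f '' Iio t) with hM
    have hκl : Tendsto (kappa f) (𝓝[<] t) (𝓝 M) := kappa_mono.tendsto_nhdsLT t
    by_cases hconst : ∃ s, s < t ∧ kappa f s = M
    · obtain ⟨s0, hs0t, hs0⟩ := hconst
      refine ⟨LampertiT f s0, ?_⟩
      have hev : ∀ᶠ s in 𝓝[<] t, LampertiT f s = LampertiT f s0 := by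
        filter_upwards [Ioo_mem_nhdsLT_of_mem ⟨hs0t, le_rfl⟩] with s hs
        have h1 : kappa f s = kappa f s0 := le_antisymm
          (hs0 ▸ le_sSup ⟨s, hs.2, rfl⟩) (kappa_mono hs.1.le)
        rw [LampertiT, LampertiT, h1]
      exact tendsto_const_nhds.congr' (hev.mono fun x hx => hx.symm)
    · push_neg at hconst
      have hlt : ∀ s, s < t → kappa f s < M := fun s hs =>
        lt_of_le_of_ne (le_sSup ⟨s, hs, rfl⟩) (hconst s hs)
      rcases eq_or_ne M ⊤ with hMtop | hMtop
      · refine ⟨limD f, ?_⟩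
        have htoReal : Tendsto (fun s => (kappa f s).toReal) (𝓝[<] t) atTop := by
          rw [tendsto_atTop]
          intro b
          have hevb : ∀ᶠ s in 𝓝[<] t, ENNReal.ofReal b < kappa f s :=
            hκl.eventually_const_lt (hMtop ▸ ENNReal.ofReal_lt_top)
          filter_upwards [hevb, eventually_mem_nhdsWithin] with s h1 h2
          have hne : kappa f s ≠ ⊤ := (hlt s h2).ne_top 
          calc b ≤ max b 0 := le_max_left b 0
          _ = (ENNReal.ofReal b).toReal := by rw [ENNReal.toReal_ofReal']
          _ ≤ (kappa f s).toReal := (ENNReal.toReal_le_toReal ENNReal.ofReal_ne_top hne).2 h1.le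
        have hev : (fun s => f (kappa f s).toReal) =ᶠ[𝓝[<] t] LampertiT f := by
          filter_upwards [eventually_mem_nhdsWithin] with s hs
          exact (hg_def s (hlt s hs).ne_top).symm
        exact (hlim.comp htoReal).congr' hev
      · obtain ⟨l, hl⟩ := hf.1.2 M.toReal
        refine ⟨l, ?_⟩
        have hnetop : ∀ s, s < t → kappa f s ≠ ⊤ := fun s hs =>
          ((hlt s hs).trans (lt_top_iff_ne_top.2 hMtop)).ne
        have htoReal : Tendsto (fun s => (kappa f s).toReal) (𝓝[<] t) (𝓝[<] M.toReal) := by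
          rw [tendsto_nhdsWithin_iff]
          constructor
          · exact (ENNReal.tendsto_toReal hMtop).comp hκl
          · filter_upwards [eventually_mem_nhdsWithin] with s hs
            exact (ENNReal.toReal_lt_toReal (hnetop s hs) hMtop).2 (hlt s hs)
        have hev : (fun s => f (kappa f s).toReal) =ᶠ[𝓝[<] t] LampertiT f := by
          filter_upwards [eventually_mem_nhdsWithin] with s hs
          exact (hg_def s (hnetop s hs)).symm
        exact (hl.comp htoReal).congr' hev
  · -- constant on negatives
    intro t ht
    have hofReal : ENNReal.ofReal t = ENNReal.ofReal 0 := by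
      rw [ENNReal.ofReal_zero, ENNReal.ofReal_eq_zero]
      exact ht.le
    have hk : kappa f t = kappa f 0 := by
      rw [kappa, kappa, hofReal]
    rw [LampertiT, LampertiT, hk]
  · -- limit at infinity
    by_cases hA : ∃ t0 : ℝ, kappa f t0 = ⊤
    · obtain ⟨t0, ht0⟩ := hA
      have hev : ∀ᶠ t in atTop, LampertiT f t = limD f :=
        eventually_atTop.2 ⟨t0, fun s hs => hg_top s (top_le_iff.1 (ht0 ▸ kappa_mono hs))⟩
      have htend : Tendsto (LampertiT f) atTop (𝓝 (limD f)) :=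
        tendsto_const_nhds.congr' (hev.mono fun x hx => hx.symm)
      rcases hlim01 with h | h
      · exact Or.inl (h ▸ htend)
      · exact Or.inr (h ▸ htend)
    · push_neg at hA
      set V := ⨆ t : ℝ, kappa f t with hV
      have hub : ∀ t : ℝ, kappa f t ≤ V := fun t => le_iSup _ t
      have hkV : Tendsto (kappa f) atTop (𝓝 V) := tendsto_atTop_iSup kappa_mono
      have hgeq : ∀ t : ℝ, LampertiT f t = f (kappa f t).toReal := fun t => hg_def t (hA t)
      rcases eq_or_ne V ⊤ with hVtop | hVtop
      · have htoReal : Tendsto (fun t => (kappa f t).toReal) atTop atTop := by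
          rw [tendsto_atTop]
          intro b
          have hevb : ∀ᶠ t in atTop, ENNReal.ofReal b < kappa f t :=
            hkV.eventually_const_lt (hVtop ▸ ENNReal.ofReal_lt_top)
          filter_upwards [hevb] with t h1
          calc b ≤ max b 0 := le_max_left b 0
          _ = (ENNReal.ofReal b).toReal := by rw [ENNReal.toReal_ofReal']
          _ ≤ (kappa f t).toReal := (ENNReal.toReal_le_toReal ENNReal.ofReal_ne_top (hA t)).2 h1.le
        have htend : Tendsto (LampertiT f) atTop (𝓝 (limD f)) :=
          (hlim.comp htoReal).congr fun t => (hgeq t).symm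
        rcases hlim01 with h | h
        · exact Or.inl (h ▸ htend)
        · exact Or.inr (h ▸ htend)
      · set r := V.toReal with hrdef
        have hθtop : ∀ ε : ℝ, 0 < ε → theta f (r + ε) = ⊤ := by
          intro ε hε
          apply eq_top_of_forall_ofReal_lt
          intro t
          have h1 : kappa f t < ENNReal.ofReal (r + ε) := by
            apply lt_of_le_of_lt (hub t)
            calc V = ENNReal.ofReal r := (ENNReal.ofReal_toReal hVtop).symm
            _ < ENNReal.ofReal (r + ε) := by
                rw [ENNReal.ofReal_lt_ofReal_iff (by positivity)]
                linarith [ENNReal.toReal_nonneg (a := V)]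
          rw [kappa] at h1
          obtain ⟨x, hx, hxlt⟩ := sInf_lt_iff.1 h1
          obtain ⟨u, hu0, rfl, hu⟩ := hx
          have hur : u < r + ε := by
            have h0 : (0:ℝ) < r + ε := by positivity
            exact (ENNReal.ofReal_lt_ofReal_iff h0).1 hxlt
          exact lt_of_lt_of_le hu (theta_mono hur.le)
        by_cases hattain : ∃ t0 : ℝ, kappa f t0 = V
        · obtain ⟨t0, ht0⟩ := hattain
          have hconst : ∀ t, t0 ≤ t → kappa f t = V := fun t ht =>
            le_antisymm (hub t) (ht0 ▸ kappa_mono ht)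
          have hfr : f r = ⊤ := by
            by_contra hfr
            have hθr : theta f r ≤ ENNReal.ofReal t0 := by
              by_contra h'
              push_neg at h'
              rcases eq_or_lt_of_le (ENNReal.toReal_nonneg (a := V)) with h0 | h0
              · rw [← hrdef] at h0
                rw [← h0, theta_nonpos le_rfl] at h'
                simp at h'
              · obtain ⟨u, hu0, hur, hu⟩ := exists_lt_theta hmeas h0 h'
                have hk1 : kappa f t0 ≤ ENNReal.ofReal u := kappa_le hu0 hu
                have hk2 : ENNReal.ofReal u < V := by
                  calc ENNReal.ofReal u < ENNReal.ofReal r := (ENNReal.ofReal_lt_ofReal_iff h0).2 hur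
                  _ = V := ENNReal.ofReal_toReal hVtop
                rw [ht0] at hk1
                exact absurd hk1 (not_le.2 hk2)
            obtain ⟨δ, hδpos, hbound⟩ : ∃ δ > 0, ∀ x, r ≤ x → x < r + δ → f x < f r + 1 := by
              have hmem : Iio (f r + 1) ∈ 𝓝 (f r) :=
                Iio_mem_nhds (ENNReal.lt_add_right hfr one_ne_zero)
              have := (hf.1.1 r) hmem
              rw [mem_map, Metric.mem_nhdsWithin_iff] at this
              obtain ⟨ε, hεpos, hsub⟩ := this
              refine ⟨ε, hεpos, fun x hx1 hx2 => ?_⟩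
              apply hsub
              constructor
              · rw [Real.ball_eq_Ioo]
                exact ⟨by linarith, by linarith⟩
              · exact hx1
            have hle : ∫⁻ x in Ioc r (r + δ/2), f x ≤ (f r + 1) * ENNReal.ofReal (δ/2) := by
              calc ∫⁻ x in Ioc r (r + δ/2), f x ≤ ∫⁻ _ in Ioc r (r + δ/2), (f r + 1) := by
                    apply setLIntegral_mono' measurableSet_Ioc
                    intro x hx
                    exact (hbound x hx.1.le (by linarith [hx.2])).le
              _ = (f r + 1) * ENNReal.ofReal (δ/2) := by
                    rw [setLIntegral_const, Real.volume_Ioc]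
                    congr 1
                    ring_nf
            have hne : theta f (r + δ/2) ≠ ⊤ := by
              rw [theta_add (ENNReal.toReal_nonneg (a := V)) (by linarith)]
              apply ENNReal.add_ne_top.2
              constructor
              · exact ne_top_of_le_ne_top ENNReal.ofReal_ne_top hθr
              · apply ne_top_of_le_ne_top _ hle
                exact ENNReal.mul_ne_top (by simp [hfr]) ENNReal.ofReal_ne_top
            exact hne (hθtop (δ/2) (by linarith))
          refine Or.inr ?_
          have hev : ∀ᶠ t in atTop, LampertiT f t = (⊤ : E) :=
            eventually_atTop.2 ⟨t0, fun s hs => by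
              rw [hgeq s, hconst s hs, ← hrdef, hfr]⟩
          exact tendsto_const_nhds.congr' (hev.mono fun x hx => hx.symm)
        · push_neg at hattain
          have hlt : ∀ t : ℝ, kappa f t < V := fun t =>
            lt_of_le_of_ne (hub t) (hattain t)
          have hV0 : V ≠ 0 := by
            intro h0
            exact absurd (hlt 0) (by simp [h0])
          have hr0 : 0 < r := ENNReal.toReal_pos hV0 hVtop
          have hθfin : ∀ u, 0 ≤ u → u < r → theta f u ≠ ⊤ := by
            intro u hu0 hur
            have h1 : ENNReal.ofReal u < V := by
              rw [← ENNReal.ofReal_toReal hVtop]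
              exact (ENNReal.ofReal_lt_ofReal_iff hr0).2 hur
            obtain ⟨t, ht⟩ := lt_iSup_iff.1 h1
            exact ne_top_of_le_ne_top ENNReal.ofReal_ne_top (theta_le_of_lt_kappa hu0 ht)
          have hθr : theta f r = ⊤ := by
            apply eq_top_of_forall_ofReal_lt
            intro t
            have h1 : kappa f t < V := hlt t
            rw [kappa] at h1
            obtain ⟨x, hx, hxlt⟩ := sInf_lt_iff.1 h1
            obtain ⟨u, hu0, rfl, hu⟩ := hx
            have hur : u < r := by
              rw [← ENNReal.ofReal_toReal hVtop] at hxlt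
              exact (ENNReal.ofReal_lt_ofReal_iff hr0).1 hxlt
            exact lt_of_lt_of_le hu (theta_mono hur.le)
          obtain ⟨l, hl⟩ := hf.1.2 r
          have hltop : l = ⊤ := by
            by_contra hltop
            obtain ⟨δ, hδpos, hbound⟩ : ∃ δ > 0, ∀ x, r - δ < x → x < r → f x < l + 1 := by
              have hmem : Iio (l + 1) ∈ 𝓝 l :=
                Iio_mem_nhds (ENNReal.lt_add_right hltop one_ne_zero)
              have := hl hmem
              rw [mem_map, Metric.mem_nhdsWithin_iff] at this
              obtain ⟨ε, hεpos, hsub⟩ := this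
              refine ⟨ε, hεpos, fun x hx1 hx2 => ?_⟩
              apply hsub
              constructor
              · rw [Real.ball_eq_Ioo]
                exact ⟨by linarith, by linarith⟩
              · exact hx2
            set a := max (r - δ/2) 0 with ha
            have ha0 : 0 ≤ a := le_max_right _ _
            have har : a < r := max_lt (by linarith) hr0
            have key : theta f r ≤ theta f a + (l + 1) * ENNReal.ofReal (r - a) := by
              rw [theta_add ha0 har.le]
              gcongr
              calc ∫⁻ x in Ioc a r, f x = ∫⁻ x in Ioo a r, f x :=
                    (setLIntegral_congr Ioo_ae_eq_Ioc).symm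
              _ ≤ ∫⁻ _ in Ioo a r, (l + 1) := by
                    apply setLIntegral_mono' measurableSet_Ioo
                    intro x hx
                    have hxlb : r - δ < x := by
                      have := le_max_left (r - δ/2) 0
                      have hax : a ≤ x := hx.1.le
                      have : r - δ/2 ≤ a := le_max_left _ _
                      linarith [hx.1]
                    exact (hbound x hxlb hx.2).le
              _ = (l + 1) * ENNReal.ofReal (r - a) := by
                    rw [setLIntegral_const, Real.volume_Ioo]
            rw [hθr] at key
            have hfin : theta f a + (l + 1) * ENNReal.ofReal (r - a) ≠ ⊤ := by
              apply ENNReal.add_ne_top.2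
              constructor
              · exact hθfin a ha0 har
              · exact ENNReal.mul_ne_top (by simp [hltop]) ENNReal.ofReal_ne_top
            exact hfin (top_le_iff.1 key)
          refine Or.inr ?_
          have htoReal : Tendsto (fun t => (kappa f t).toReal) atTop (𝓝[<] r) := by
            rw [tendsto_nhdsWithin_iff]
            constructor
            · exact (ENNReal.tendsto_toReal hVtop).comp hkV
            · apply Eventually.of_forall
              intro t
              exact (ENNReal.toReal_lt_toReal (hA t) hVtop).2 (hlt t)
          have := (hl.comp htoReal).congr fun t => (hgeq t).symm
          rw [hltop] at this
          exact this
  · -- absorbing at 0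
    intro t s hs h0
    rcases eq_or_ne (kappa f t) ⊤ with h | h
    · have h2 : kappa f (t + s) = ⊤ :=
        top_le_iff.1 (h ▸ kappa_mono (le_add_of_nonneg_right hs))
      rw [hg_top _ h2]
      rw [hg_top t h] at h0
      exact h0
    · rw [hg_def t h] at h0
      exact absurd h0 (ne_zero_of_kappa_ne_top hf h)
  · -- absorbing at ⊤
    intro t s hs htop
    rcases eq_or_ne (kappa f t) ⊤ with h | h
    · have h2 : kappa f (t + s) = ⊤ :=
        top_le_iff.1 (h ▸ kappa_mono (le_add_of_nonneg_right hs))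
      rw [hg_top _ h2]
      rw [hg_top t h] at htop
      exact htop
    · rw [hg_def t h] at htop
      have h2 : kappa f (t + s) = kappa f t :=
        kappa_eq_of_top hf h htop (le_add_of_nonneg_right hs)
      rw [hg_def _ (h2 ▸ h), h2]
      exact htop


end
end

section
/- For a CSBP there exists a family of functions u_t : [0,∞) → [0,∞) such that ∫_{[0,∞]} e^{-λ z'} P_t(z, dz') = e^{-z u_t(λ)} for all z ∈ [0,∞], t ≥ 0, λ ≥ 0 (with e^{-λ·∞} = 0), and these functions satisfy the semigroup composition rule u_{t+s}(λ) = u_t(u_s(λ)). -/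
open Filter Set Topology MeasureTheory ProbabilityTheory
open scoped ENNReal

noncomputable section

/-- The transition semigroup of a continuous-state branching process: a semigroup of Markov
kernels on `E = [0,∞]` satisfying the branching property
`P_t(z₁,·) ∗ P_t(z₂,·) = P_t(z₁+z₂,·)` (where `∗` is convolution of measures), conservative
(no mass reaches `∞` from a finite state), and stochastically continuous at `t = 0`
(corresponding to càdlàg paths). -/
structure IsCSBPSemigroup (P : ℝ → Kernel E E) : Prop where
  markov : ∀ t, 0 ≤ t → IsMarkovKernel (P t)
  init : P 0 = Kernel.id
  semigroup : ∀ s, 0 ≤ s → ∀ t, 0 ≤ t → P (s + t) = (P t).comp (P s)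
  branching : ∀ t, 0 ≤ t → ∀ z₁ z₂ : E, Measure.conv (P t z₁) (P t z₂) = P t (z₁ + z₂)
  conservative : ∀ t, 0 ≤ t → ∀ z : E, z ≠ ⊤ → P t z {⊤} = 0
  stochCont : ∀ z : E, ∀ g : E → ℝ, Continuous g →
    Tendsto (fun t => ∫ z', g z' ∂(P t z)) (nhdsWithin 0 (Ici 0)) (nhds (g z))

/-- `lap λ z = e^{-λz}` on `[0,∞]`, with the convention `e^{-λ·∞} = 0`, as an `ℝ≥0∞`-valued
function. -/
def lap (l : ℝ) (z : E) : ℝ≥0∞ :=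
  if z = ⊤ then 0 else ENNReal.ofReal (Real.exp (-(l * z.toReal)))

lemma measurable_lap (l : ℝ) : Measurable (lap l) := by
  unfold lap
  exact Measurable.ite (measurableSet_singleton ⊤) measurable_const
    (ENNReal.measurable_ofReal.comp (Real.measurable_exp.comp
      (measurable_const.mul ENNReal.measurable_toReal).neg))

lemma lap_le_one {l : ℝ} (hl : 0 ≤ l) (z : E) : lap l z ≤ 1 := by
  unfold lap
  split
  · simp
  · rw [← ENNReal.ofReal_one]
    refine ENNReal.ofReal_le_ofReal ?_
    rw [Real.exp_le_one_iff]
    simp [mul_nonneg hl ENNReal.toReal_nonneg]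

lemma lap_ne_top (l : ℝ) (z : E) : lap l z ≠ ⊤ := by
  unfold lap; split <;> simp

lemma lap_pos {l : ℝ} {z : E} (hz : z ≠ ⊤) : 0 < lap l z := by
  unfold lap
  rw [if_neg hz]
  exact ENNReal.ofReal_pos.mpr (Real.exp_pos _)

lemma lap_top (l : ℝ) : lap l ⊤ = 0 := by unfold lap; simp

lemma lap_add (l : ℝ) (x y : E) : lap l (x + y) = lap l x * lap l y := by
  unfold lap
  rcases eq_or_ne x ⊤ with hx | hx
  · simp [hx]
  rcases eq_or_ne y ⊤ with hy | hy
  · simp [hy]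
  rw [if_neg hx, if_neg hy, if_neg (ENNReal.add_ne_top.mpr ⟨hx, hy⟩)]
  rw [← ENNReal.ofReal_mul (Real.exp_nonneg _), ← Real.exp_add]
  congr 2
  rw [ENNReal.toReal_add hx hy]
  ring

lemma lintegral_lap_conv (l : ℝ) (μ ν : Measure E) [SFinite μ] [SFinite ν] :
    ∫⁻ z, lap l z ∂(μ.conv ν) = (∫⁻ z, lap l z ∂μ) * ∫⁻ z, lap l z ∂ν := by
  rw [Measure.conv, lintegral_map (measurable_lap l) (by fun_prop)]
  simp_rw [lap_add]
  exact lintegral_prod_mul (measurable_lap l).aemeasurable (measurable_lap l).aemeasurable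

lemma lap_lint_le_one {l : ℝ} (hl : 0 ≤ l) (μ : Measure E) [IsProbabilityMeasure μ] :
    ∫⁻ z, lap l z ∂μ ≤ 1 := by
  calc ∫⁻ z, lap l z ∂μ ≤ ∫⁻ _, 1 ∂μ := lintegral_mono (lap_le_one hl)
  _ = 1 := by simp

lemma lap_lint_pos {l : ℝ} (μ : Measure E) [IsProbabilityMeasure μ] (hμ : μ {⊤} = 0) :
    0 < ∫⁻ z, lap l z ∂μ := by
  rw [lintegral_pos_iff_support (measurable_lap l)]
  have hs : Function.support (lap l) = {(⊤ : E)}ᶜ := by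
    ext z
    simp only [Function.mem_support, mem_compl_iff, mem_singleton_iff]
    constructor
    · intro h h'; exact h (by simp [h', lap_top])
    · intro h; exact (lap_pos h).ne'
  rw [hs]
  have := prob_compl_eq_one_sub (μ := μ) (measurableSet_singleton (⊤ : E))
  rw [this, hμ]
  simp

lemma conc_of_lap_zero {μ : Measure E} (h : ∫⁻ z, lap 1 z ∂μ = 0) : μ {(⊤:E)}ᶜ = 0 := by
  rw [lintegral_eq_zero_iff (measurable_lap 1)] at h
  have : {z : E | ¬ lap 1 z = 0} = {(⊤:E)}ᶜ := by
    ext z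
    simp only [mem_setOf_eq, mem_compl_iff, mem_singleton_iff]
    constructor
    · intro hz h'; exact hz (by simp [h', lap_top])
    · intro hz; exact (lap_pos hz).ne'
  have h2 : μ {z : E | ¬ lap 1 z = 0} = 0 := h
  rwa [this] at h2

lemma conc_eq_dirac {μ : Measure E} [IsProbabilityMeasure μ] (h : μ {(⊤:E)}ᶜ = 0) :
    μ = Measure.dirac ⊤ := by
  have h1 : μ {(⊤:E)} = 1 := (prob_compl_eq_zero_iff (measurableSet_singleton _)).mp h
  ext s hs
  rw [Measure.dirac_apply' _ hs]
  by_cases ht : (⊤ : E) ∈ s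
  · rw [indicator_of_mem ht]
    refine le_antisymm prob_le_one ?_
    calc (1 : E → ℝ≥0∞) ⊤ = μ {(⊤:E)} := by simp [h1]
    _ ≤ μ s := measure_mono (singleton_subset_iff.mpr ht)
  · rw [indicator_of_notMem ht]
    refine le_antisymm ?_ (by simp)
    refine le_trans (measure_mono ?_) h.le
    intro x hx
    simp only [mem_compl_iff, mem_singleton_iff]
    rintro rfl; exact ht hx

lemma lintegral_conc {μ : Measure E} [IsProbabilityMeasure μ] (h : μ {(⊤:E)}ᶜ = 0)
    {f : E → ℝ≥0∞} (hf : Measurable f) : ∫⁻ z, f z ∂μ = f ⊤ := by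
  rw [conc_eq_dirac h, lintegral_dirac' _ hf]

lemma cauchy_linear {G : ℝ → ℝ}
    (hadd : ∀ x y, 0 ≤ x → 0 ≤ y → G (x + y) = G x + G y)
    (hmono : ∀ x y, 0 ≤ x → x ≤ y → G x ≤ G y) :
    ∀ x, 0 ≤ x → G x = x * G 1 := by
  have h0 : G 0 = 0 := by have := hadd 0 0 le_rfl le_rfl; simp at this; linarith
  have hnat : ∀ (n : ℕ) (x : ℝ), 0 ≤ x → G (n * x) = n * G x := by
    intro n
    induction n with
    | zero => intro x hx; simp [h0]
    | succ n ih =>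
      intro x hx
      have : ((n : ℝ) + 1) * x = n * x + x := by ring
      push_cast
      rw [this, hadd _ _ (by positivity) hx, ih x hx]
      ring
  have hG1 : 0 ≤ G 1 := by have := hmono 0 1 le_rfl zero_le_one; linarith
  have hfrac : ∀ (n m : ℕ), 0 < m → G ((n : ℝ) / m) = ((n : ℝ) / m) * G 1 := by
    intro n m hm
    have hm' : (0 : ℝ) < m := by exact_mod_cast hm
    have h1 : G ((m : ℝ) * ((n : ℝ) / m)) = m * G ((n : ℝ) / m) :=
      hnat m _ (by positivity)
    have h2 : (m : ℝ) * ((n : ℝ) / m) = (n : ℝ) := by field_simp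
    have h3 : G (n : ℝ) = n * G 1 := by
      have := hnat n 1 zero_le_one; simpa using this
    rw [h2, h3] at h1
    field_simp at h1 ⊢
    linarith
  have hrat : ∀ q : ℚ, 0 ≤ q → G (q : ℝ) = (q : ℝ) * G 1 := by
    intro q hq
    have hnum : (0:ℤ) ≤ q.num := Rat.num_nonneg.mpr hq
    have : (q : ℝ) = (q.num.toNat : ℝ) / (q.den : ℝ) := by
      rw [Rat.cast_def]
      congr 1
      exact_mod_cast (Int.toNat_of_nonneg hnum).symm
    rw [this]
    exact hfrac _ _ q.pos
  intro x hx
  -- upper bound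
  have hub : G x ≤ x * G 1 := by
    rcases eq_or_lt_of_le hG1 with hG1' | hG1'
    · rcases exists_rat_btwn (lt_add_one x) with ⟨q, hq1, hq2⟩
      have hq0 : (0:ℚ) ≤ q := by exact_mod_cast le_of_lt (lt_of_le_of_lt hx hq1)
      have := hmono x q hx hq1.le
      rw [hrat q hq0, ← hG1'] at this
      simpa [← hG1'] using this
    · refine le_of_forall_pos_le_add ?_
      intro ε hε
      rcases exists_rat_btwn (lt_add_of_pos_right x (div_pos hε hG1')) with ⟨q, hq1, hq2⟩
      have hq0 : (0:ℚ) ≤ q := by exact_mod_cast le_of_lt (lt_of_le_of_lt hx hq1)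
      have h4 := hmono x q hx hq1.le
      rw [hrat q hq0] at h4
      have h5 : (q : ℝ) * G 1 ≤ (x + ε / G 1) * G 1 :=
        mul_le_mul_of_nonneg_right hq2.le hG1
      have h6 : (x + ε / G 1) * G 1 = x * G 1 + ε := by field_simp
      linarith
  -- lower bound
  have hlb : x * G 1 ≤ G x := by
    rcases eq_or_lt_of_le hG1 with hG1' | hG1'
    · rw [← hG1']
      have := hmono 0 x le_rfl hx
      linarith
    · rcases eq_or_lt_of_le hx with hx' | hx'
      · simp [← hx', h0]
      refine le_of_forall_pos_le_add ?_
      intro ε hε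
      set δ : ℝ := min x (ε / G 1) with hδ
      have hδpos : 0 < δ := lt_min hx' (div_pos hε hG1')
      rcases exists_rat_btwn (sub_lt_self x hδpos) with ⟨q, hq1, hq2⟩
      have hq0 : (0:ℚ) ≤ q := by
        have : (0:ℝ) ≤ x - δ := by
          have : δ ≤ x := min_le_left _ _
          linarith
        exact_mod_cast le_of_lt (lt_of_le_of_lt this hq1)
      have h4 := hmono q x (by exact_mod_cast hq0) hq2.le
      rw [hrat q hq0] at h4
      have h5 : (x - δ) * G 1 ≤ (q:ℝ) * G 1 := mul_le_mul_of_nonneg_right hq1.le hG1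
      have h6 : δ * G 1 ≤ ε := by
        have : δ ≤ ε / G 1 := min_le_right _ _
        calc δ * G 1 ≤ (ε / G 1) * G 1 := mul_le_mul_of_nonneg_right this hG1
        _ = ε := by field_simp
      nlinarith
  linarith

def gtest (z : E) : ℝ := ((1 + z)⁻¹).toReal

lemma gtest_cont : Continuous gtest := by
  have h1 : Continuous fun z : E => (1 + z)⁻¹ :=
    continuous_inv.comp (continuous_add_left 1)
  refine ENNReal.continuousOn_toReal.comp_continuous h1 ?_
  intro z
  simp only [mem_setOf_eq, ne_eq, ENNReal.inv_eq_top]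
  intro h
  have h1 : (1 : ℝ≥0∞) = 0 := (add_eq_zero.mp h).1
  exact one_ne_zero h1

lemma gtest_top : gtest ⊤ = 0 := by simp [gtest]

lemma gtest_nonneg (z : E) : 0 ≤ gtest z := ENNReal.toReal_nonneg

lemma gtest_le_one (z : E) : gtest z ≤ 1 := by
  unfold gtest
  rw [← ENNReal.toReal_one]
  refine ENNReal.toReal_mono (by simp) ?_
  rw [ENNReal.inv_le_one]
  exact le_add_right le_rfl

lemma lap_le_ofReal_gtest (z : E) : lap 1 z ≤ ENNReal.ofReal (gtest z) := by
  rcases eq_or_ne z ⊤ with rfl | hz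
  · simp [lap, gtest]
  · rw [lap, if_neg hz, gtest]
    have hzt : (1 + z) ≠ ⊤ := by simp [hz]
    have hi : ((1 + z)⁻¹ : ℝ≥0∞) ≠ ⊤ := by
      simp only [ne_eq, ENNReal.inv_eq_top]
      intro h
      exact one_ne_zero ((add_eq_zero.mp h).1)
    rw [ENNReal.ofReal_toReal hi, ← ENNReal.ofReal_toReal hi, ENNReal.toReal_inv,
      ENNReal.toReal_add (by simp) hz, ENNReal.toReal_one]
    refine ENNReal.ofReal_le_ofReal ?_
    have ha : (0:ℝ) ≤ z.toReal := ENNReal.toReal_nonneg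
    rw [one_mul, Real.exp_neg]
    refine inv_anti₀ (by positivity) ?_
    have := Real.add_one_le_exp z.toReal
    linarith

lemma P_top_conc (P : ℝ → Kernel E E) (hP : IsCSBPSemigroup P) :
    ∀ t, 0 ≤ t → (P t ⊤) {(⊤:E)}ᶜ = 0 := by
  -- dichotomy for each time
  have hdich : ∀ t, 0 ≤ t → (P t ⊤) {(⊤:E)}ᶜ = 0 ∨ ∫⁻ z, lap 1 z ∂(P t ⊤) = 1 := by
    intro t ht
    haveI := hP.markov t ht
    set L := ∫⁻ z, lap 1 z ∂(P t ⊤) with hL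
    have hidem : Measure.conv (P t ⊤) (P t ⊤) = P t ⊤ := by
      have := hP.branching t ht ⊤ ⊤
      simpa using this
    have hLL : L * L = L := by
      rw [hL, ← lintegral_lap_conv 1 (P t ⊤) (P t ⊤), hidem]
    have hle : L ≤ 1 := lap_lint_le_one zero_le_one _
    rcases eq_or_ne L 0 with h0 | h0
    · exact Or.inl (conc_of_lap_zero h0)
    · right
      have hne : L ≠ ⊤ := hle.trans_lt (by norm_num) |>.ne
      have ha : L.toReal * L.toReal = L.toReal := by
        rw [← ENNReal.toReal_mul, hLL]
      have ha0 : L.toReal ≠ 0 := by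
        simp only [ne_eq, ENNReal.toReal_eq_zero_iff]
        push_neg
        exact ⟨h0, hne⟩
      have ha1 : L.toReal = 1 := by
        have : L.toReal * (L.toReal - 1) = 0 := by ring_nf; linarith
        rcases mul_eq_zero.mp this with h | h
        · exact absurd h ha0
        · linarith
      rw [← ENNReal.ofReal_toReal hne, ha1]
      simp
  -- small times are concentrated
  have hsmall : ∃ ε > (0:ℝ), ∀ s, 0 ≤ s → s < ε → (P s ⊤) {(⊤:E)}ᶜ = 0 := by
    have htend := hP.stochCont ⊤ gtest gtest_cont
    rw [gtest_top] at htend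
    have hev : ∀ᶠ s in nhdsWithin 0 (Ici (0:ℝ)),
        |∫ z', gtest z' ∂(P s ⊤)| < 1/2 := by
      filter_upwards [htend (eventually_abs_sub_lt 0 (by norm_num : (0:ℝ) < 1/2))] with s hs
      simpa using hs
    rw [eventually_nhdsWithin_iff] at hev
    rcases Metric.eventually_nhds_iff.mp hev with ⟨ε, hε, hball⟩
    refine ⟨ε, hε, fun s hs0 hsε => ?_⟩
    haveI := hP.markov s hs0
    rcases hdich s hs0 with h | h
    · exact h
    · exfalso
      have h1 : (1:ℝ≥0∞) ≤ ∫⁻ z, ENNReal.ofReal (gtest z) ∂(P s ⊤) := by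
        rw [← h]; exact lintegral_mono lap_le_ofReal_gtest
      have h2 : ∫⁻ z, ENNReal.ofReal (gtest z) ∂(P s ⊤) ≤ 1 := by
        calc ∫⁻ z, ENNReal.ofReal (gtest z) ∂(P s ⊤)
            ≤ ∫⁻ _, 1 ∂(P s ⊤) := lintegral_mono fun z => by
              simpa using ENNReal.ofReal_le_ofReal (gtest_le_one z)
        _ = 1 := by simp
      have h3 : ∫ z', gtest z' ∂(P s ⊤) =
          (∫⁻ z, ENNReal.ofReal (gtest z) ∂(P s ⊤)).toReal := by
        rw [integral_eq_lintegral_of_nonneg_ae (Eventually.of_forall gtest_nonneg)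
          gtest_cont.aestronglyMeasurable]
      have h4 : ∫ z', gtest z' ∂(P s ⊤) = 1 := by
        rw [h3, le_antisymm h2 h1]; simp
      have h5 := hball (show dist s 0 < ε by simpa [Real.dist_eq, abs_of_nonneg hs0] using hsε) hs0
      rw [h4] at h5
      norm_num at h5
  -- bootstrap to all times
  rcases hsmall with ⟨ε, hε, hconc⟩
  have hstep : ∀ s, 0 ≤ s → ∀ r, 0 ≤ r → (P s ⊤) {(⊤:E)}ᶜ = 0 →
      (P r ⊤) {(⊤:E)}ᶜ = 0 → (P (s + r) ⊤) {(⊤:E)}ᶜ = 0 := by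
    intro s hs r hr h1 h2
    haveI := hP.markov s hs
    haveI := hP.markov r hr
    rw [hP.semigroup s hs r hr, Kernel.comp_apply,
      Measure.bind_apply (measurableSet_singleton (⊤:E)).compl (Kernel.measurable _).aemeasurable]
    rw [lintegral_conc h1 (Kernel.measurable_coe _ (measurableSet_singleton (⊤:E)).compl)]
    exact h2
  intro t ht
  rcases eq_or_lt_of_le ht with rfl | ht'
  · rw [hP.init, Kernel.id_apply]
    rw [Measure.dirac_apply' _ (measurableSet_singleton (⊤:E)).compl]
    simp
  · obtain ⟨n, hn⟩ := exists_nat_gt (t / ε)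
    have hn0 : 0 < n := by
      by_contra h
      push_neg at h
      interval_cases n
      simp at hn
      exact absurd hn (not_lt.mpr (le_of_lt (div_pos ht' hε))) 
    have hs0 : 0 ≤ t / n := by positivity
    have hsε : t / n < ε := by
      rw [div_lt_iff₀ (by exact_mod_cast hn0)]
      rw [div_lt_iff₀ hε] at hn
      linarith [mul_comm ε (n:ℝ)]
    have key : ∀ m : ℕ, (P (m * (t / n)) ⊤) {(⊤:E)}ᶜ = 0 := by
      intro m
      induction m with
      | zero =>
        simp only [Nat.cast_zero, zero_mul]
        rw [hP.init, Kernel.id_apply, Measure.dirac_apply' _ (measurableSet_singleton (⊤:E)).compl]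
        simp
      | succ m ih =>
        have : ((m:ℝ) + 1) * (t / n) = m * (t / n) + t / n := by ring
        push_cast
        rw [this]
        exact hstep _ (by positivity) _ hs0 ih (hconc _ hs0 hsε)
    have := key n
    rwa [mul_div_cancel₀ t (by exact_mod_cast hn0.ne')] at this

def ufun (P : ℝ → Kernel E E) (t l : ℝ) : ℝ :=
  -Real.log (∫⁻ z, lap l z ∂(P t 1)).toReal

lemma lap_one_inj {a b : ℝ} (h : lap a 1 = lap b 1) : a = b := by
  unfold lap at h
  rw [if_neg (by simp), if_neg (by simp)] at h
  simp only [ENNReal.toReal_one, mul_one] at h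
  rw [ENNReal.ofReal_eq_ofReal_iff (Real.exp_nonneg _) (Real.exp_nonneg _),
    Real.exp_eq_exp] at h
  linarith

lemma ufun_key (P : ℝ → Kernel E E) (hP : IsCSBPSemigroup P)
    {t : ℝ} (ht : 0 ≤ t) {l : ℝ} (hl : 0 ≤ l) :
    0 ≤ ufun P t l ∧ ∀ z : E, ∫⁻ z', lap l z' ∂(P t z) = lap (ufun P t l) z := by
  haveI := hP.markov t ht
  set F : E → ℝ≥0∞ := fun z => ∫⁻ z', lap l z' ∂(P t z) with hF
  have hFmul : ∀ z₁ z₂ : E, F (z₁ + z₂) = F z₁ * F z₂ := by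
    intro z₁ z₂
    rw [hF]
    simp only
    rw [← hP.branching t ht z₁ z₂, lintegral_lap_conv]
  have hFle : ∀ z, F z ≤ 1 := fun z => lap_lint_le_one hl _
  have hFne : ∀ z, F z ≠ ⊤ := fun z => ((hFle z).trans_lt (by norm_num)).ne
  have hFpos : ∀ z : E, z ≠ ⊤ → 0 < F z := fun z hz =>
    lap_lint_pos _ (hP.conservative t ht z hz)
  have hFtr_pos : ∀ z : E, z ≠ ⊤ → 0 < (F z).toReal := fun z hz =>
    ENNReal.toReal_pos (hFpos z hz).ne' (hFne z)
  have hFtr_le1 : ∀ z, (F z).toReal ≤ 1 := fun z => by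
    rw [← ENNReal.toReal_one]
    exact ENNReal.toReal_mono (by simp) (hFle z)
  set G : ℝ → ℝ := fun x => -Real.log ((F (ENNReal.ofReal x)).toReal) with hG
  have hofne : ∀ x : ℝ, ENNReal.ofReal x ≠ ⊤ := fun x => ENNReal.ofReal_ne_top
  have hGadd : ∀ x y, 0 ≤ x → 0 ≤ y → G (x + y) = G x + G y := by
    intro x y hx hy
    rw [hG]
    simp only
    rw [ENNReal.ofReal_add hx hy, hFmul, ENNReal.toReal_mul,
      Real.log_mul (hFtr_pos _ (hofne x)).ne' (hFtr_pos _ (hofne y)).ne']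
    ring
  have hGmono : ∀ x y, 0 ≤ x → x ≤ y → G x ≤ G y := by
    intro x y hx hxy
    rw [hG]
    simp only [neg_le_neg_iff]
    refine Real.log_le_log (hFtr_pos _ (hofne y)) ?_
    have h2 : ENNReal.ofReal y = ENNReal.ofReal x + ENNReal.ofReal (y - x) := by
      rw [← ENNReal.ofReal_add hx (by linarith)]
      congr 1
      ring
    rw [h2, hFmul]
    refine ENNReal.toReal_mono (hFne _) ?_
    exact mul_le_of_le_one_right (by simp) (hFle _)
  have hlin := cauchy_linear hGadd hGmono
  have hu : ufun P t l = G 1 := by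
    rw [hG, hF, ufun]
    simp
  have hupos : 0 ≤ ufun P t l := by
    rw [hu, hG]
    simp only [ENNReal.ofReal_one, neg_nonneg]
    exact Real.log_nonpos (hFtr_pos 1 (by simp)).le (hFtr_le1 1)
  refine ⟨hupos, fun z => ?_⟩
  show F z = lap (ufun P t l) z
  rcases eq_or_ne z ⊤ with rfl | hz
  · rw [hF]
    simp only
    rw [lintegral_conc (P_top_conc P hP t ht) (measurable_lap l), lap_top, lap_top]
  · have hz' : ENNReal.ofReal z.toReal = z := ENNReal.ofReal_toReal hz
    have h1 := hlin z.toReal ENNReal.toReal_nonneg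
    have h1' : -Real.log ((F z).toReal) = z.toReal * ufun P t l := by
      rw [hu]
      simp only [hG] at h1
      rwa [hz'] at h1
    have h2 : (F z).toReal = Real.exp (-(ufun P t l * z.toReal)) := by
      rw [mul_comm (ufun P t l), ← h1', neg_neg, Real.exp_log (hFtr_pos z hz)]
    rw [lap, if_neg hz, ← h2, ENNReal.ofReal_toReal (hFne z)]
  

lemma ufun_comp (P : ℝ → Kernel E E) (hP : IsCSBPSemigroup P)
    {t : ℝ} (ht : 0 ≤ t) {s : ℝ} (hs : 0 ≤ s) {l : ℝ} (hl : 0 ≤ l) :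
    ufun P (t + s) l = ufun P t (ufun P s l) := by
  haveI := hP.markov t ht
  haveI := hP.markov s hs
  obtain ⟨hus, hkeys⟩ := ufun_key P hP hs hl
  obtain ⟨hut, hkeyt⟩ := ufun_key P hP ht hus
  obtain ⟨_, hkeyts⟩ := ufun_key P hP (by linarith : (0:ℝ) ≤ t + s) hl
  refine lap_one_inj ?_
  rw [← hkeyts 1]
  rw [hP.semigroup t ht s hs]
  rw [show (P s).comp (P t) = (P s) ∘ₖ (P t) from rfl]
  rw [Kernel.lintegral_comp (P s) (P t) 1 (measurable_lap l)]
  calc ∫⁻ y, ∫⁻ z, lap l z ∂(P s y) ∂(P t 1)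
      = ∫⁻ y, lap (ufun P s l) y ∂(P t 1) := by
        refine lintegral_congr fun y => hkeys y
  _ = lap (ufun P t (ufun P s l)) 1 := hkeyt 1



/-- **Existence of the cumulant semigroup of a CSBP:**
there is a family `u_t : [0,∞) → [0,∞)` with
`∫_{[0,∞]} e^{-λ z'} P_t(z,dz') = e^{-z u_t(λ)}` for all `z ∈ [0,∞]`, `t ≥ 0`, `λ ≥ 0`
(with `e^{-λ·∞} = 0`), satisfying the composition rule `u_{t+s}(λ) = u_t(u_s(λ))`. -/
theorem csbp_laplace_functional
    (P : ℝ → Kernel E E) (hP : IsCSBPSemigroup P) :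
    ∃ u : ℝ → ℝ → ℝ,
      (∀ t, 0 ≤ t → ∀ l, 0 ≤ l → 0 ≤ u t l) ∧
      (∀ t, 0 ≤ t → ∀ l, 0 ≤ l → ∀ z : E,
        ∫⁻ z', lap l z' ∂(P t z) = lap (u t l) z) ∧
      (∀ t, 0 ≤ t → ∀ s, 0 ≤ s → ∀ l, 0 ≤ l → u (t + s) l = u t (u s l)) := by
  refine ⟨ufun P, ?_, ?_, ?_⟩
  · intro t ht l hl
    exact (ufun_key P hP ht hl).1
  · intro t ht l hl z
    exact (ufun_key P hP ht hl).2 z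
  · intro t ht s hs l hl
    exact ufun_comp P hP ht hs hl

end
end

section
/- The transition semigroup (P_t) of a CSBP is a Feller semigroup on E = [0,∞] (with E homeomorphic to [0,1]): for every continuous f : E → ℝ, P_t f is continuous and P_t f → f pointwise as t → 0. -/
open Filter Set Topology MeasureTheory ProbabilityTheory
open scoped ENNReal

noncomputable section

namespace CSBPAux

/-- Real-valued version of `lap`. -/
def eFun (l : ℝ) (z : E) : ℝ := if z = ⊤ then 0 else Real.exp (-(l * z.toReal))

lemma eFun_nonneg (l : ℝ) (z : E) : 0 ≤ eFun l z := by
  unfold eFun; split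
  · exact le_refl 0
  · exact (Real.exp_pos _).le

lemma eFun_le_one {l : ℝ} (hl : 0 ≤ l) (z : E) : eFun l z ≤ 1 := by
  unfold eFun; split
  · norm_num
  · rw [← Real.exp_zero]
    apply Real.exp_le_exp.2
    nlinarith [ENNReal.toReal_nonneg (a := z)]

lemma lap_eq_ofReal (l : ℝ) (z : E) : lap l z = ENNReal.ofReal (eFun l z) := by
  unfold lap eFun; split <;> simp

lemma eFun_eq_toReal (l : ℝ) (z : E) : eFun l z = (lap l z).toReal := by
  rw [lap_eq_ofReal, ENNReal.toReal_ofReal (eFun_nonneg l z)]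

lemma lap_le_one {l : ℝ} (hl : 0 ≤ l) (z : E) : lap l z ≤ 1 := by
  rw [lap_eq_ofReal]; exact ENNReal.ofReal_le_one.2 (eFun_le_one hl z)

lemma eFun_mul (l m : ℝ) (z : E) : eFun l z * eFun m z = eFun (l + m) z := by
  unfold eFun
  by_cases hz : z = ⊤
  · simp [hz]
  · simp only [hz, if_false]
    rw [← Real.exp_add]; congr 1; ring

lemma eFun_zero_point (l : ℝ) : eFun l 0 = 1 := by
  simp [eFun]

lemma eFun_injective {l : ℝ} (hl : 0 < l) : Function.Injective (eFun l) := by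
  intro x y h
  unfold eFun at h
  by_cases hx : x = ⊤ <;> by_cases hy : y = ⊤
  · rw [hx, hy]
  · simp only [hx, hy, if_true, if_false] at h
    exact absurd h.symm (ne_of_gt (Real.exp_pos _))
  · simp only [hx, hy, if_true, if_false] at h
    exact absurd h (ne_of_gt (Real.exp_pos _))
  · simp only [hx, hy, if_false] at h
    have := Real.exp_injective h
    have hxy : x.toReal = y.toReal := by
      have hl' : l ≠ 0 := ne_of_gt hl
      exact mul_left_cancel₀ hl' (neg_inj.1 this)
    exact (ENNReal.toReal_eq_toReal_iff' hx hy).1 hxy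

lemma continuous_eFun {l : ℝ} (hl : 0 < l) : Continuous (eFun l) := by
  rw [continuous_iff_continuousAt]
  intro z
  by_cases hz : z = ⊤
  · subst hz
    have h0 : eFun l ⊤ = 0 := by simp [eFun]
    rw [ContinuousAt, h0, Metric.tendsto_nhds]
    intro ε hε
    set M : ℝ := max 1 ((1 - Real.log ε) / l) with hM
    have hM0 : 0 ≤ M := le_trans zero_le_one (le_max_left _ _)
    have hexp : Real.exp (-(l * M)) < ε := by
      have h1 : (1 - Real.log ε) / l ≤ M := le_max_right _ _
      have h2 : 1 - Real.log ε ≤ l * M := by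
        rw [div_le_iff₀ hl] at h1; linarith [h1]
      have : -(l * M) < Real.log ε := by linarith
      calc Real.exp (-(l * M)) < Real.exp (Real.log ε) := Real.exp_lt_exp.2 this
        _ = ε := Real.exp_log hε
    filter_upwards [Ioi_mem_nhds (show ENNReal.ofReal M < ⊤ from ENNReal.ofReal_lt_top)]
      with w hw
    rw [Real.dist_eq, sub_zero, abs_of_nonneg (eFun_nonneg l w)]
    by_cases hw' : w = ⊤
    · simpa [eFun, hw'] using hε
    · have hMw : M < w.toReal := by
        have := (ENNReal.toReal_lt_toReal (a := ENNReal.ofReal M) ENNReal.ofReal_ne_top hw').2 hw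
        rwa [ENNReal.toReal_ofReal hM0] at this
      have : Real.exp (-(l * w.toReal)) ≤ Real.exp (-(l * M)) := by
        apply Real.exp_le_exp.2; nlinarith
      calc eFun l w = Real.exp (-(l * w.toReal)) := by simp [eFun, hw']
        _ ≤ Real.exp (-(l * M)) := this
        _ < ε := hexp
  · have hmem : {w : E | w ≠ ⊤} ∈ 𝓝 z := by
      have : IsOpen {w : E | w ≠ ⊤} := isOpen_ne
      exact this.mem_nhds hz
    have h1 : ContinuousAt ENNReal.toReal z := ENNReal.tendsto_toReal hz
    have h2 : ContinuousAt (fun w : E => Real.exp (-(l * w.toReal))) z := by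
      exact (Real.continuous_exp.comp ((continuous_const.mul continuous_id).neg)).continuousAt.comp h1
    apply h2.congr
    filter_upwards [hmem] with w hw
    simp [eFun, hw]

lemma continuous_eFun_param (z : E) : Continuous (fun l => eFun l z) := by
  by_cases hz : z = ⊤
  · simpa [eFun, hz] using continuous_const
  · simp only [eFun, hz, if_false]
    exact Real.continuous_exp.comp ((continuous_id.mul continuous_const).neg)


lemma measurable_lap {l : ℝ} (hl : 0 < l) : Measurable (lap l) := by
  have : Continuous (lap l) := by
    simp only [funext (lap_eq_ofReal l)]
    exact ENNReal.continuous_ofReal.comp (continuous_eFun hl)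
  exact this.measurable

/-- If `u t m = 0` for some `m > 0`, then `u t l = 0` for all `l > 0`. -/
lemma key1 (P : ℝ → Kernel E E)
    (hmarkov : ∀ t, 0 ≤ t → IsMarkovKernel (P t))
    (u : ℝ → ℝ → ℝ)
    (hlap : ∀ t, 0 ≤ t → ∀ l, 0 ≤ l → ∀ z : E,
      ∫⁻ z', lap l z' ∂(P t z) = lap (u t l) z)
    {t m : ℝ} (ht : 0 ≤ t) (hm : 0 < m) (h0 : u t m = 0) :
    ∀ l, 0 < l → u t l = 0 := by
  haveI := hmarkov t ht
  set μ : Measure E := P t 1 with hμ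
  have h1top : (1 : E) ≠ ⊤ := ENNReal.one_ne_top
  have hlm : ∫⁻ z', lap m z' ∂μ = 1 := by
    rw [hlap t ht m hm.le 1, h0]
    simp [lap, h1top]
  -- lap m = 1 a.e.
  have hmeas : Measurable (lap m) := measurable_lap hm
  have hle : ∀ z' : E, lap m z' ≤ 1 := lap_le_one hm.le
  have hsub : ∫⁻ z', (1 - lap m z') ∂μ = 0 := by
    rw [lintegral_sub hmeas (by rw [hlm]; exact ENNReal.one_ne_top) (ae_of_all _ hle)]
    simp [hlm]
  have hae1 : ∀ᵐ z' ∂μ, lap m z' = 1 := by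
    have := (lintegral_eq_zero_iff (measurable_const.sub hmeas)).1 hsub
    filter_upwards [this] with z' hz'
    have : (1 : ℝ≥0∞) ≤ lap m z' := by
      rw [Pi.sub_apply, Pi.zero_apply, tsub_eq_zero_iff_le] at hz'; exact hz'
    exact le_antisymm (hle z') this
  have hae0 : ∀ᵐ z' ∂μ, z' = 0 := by
    filter_upwards [hae1] with z' hz'
    by_contra hz0
    by_cases hzt : z' = ⊤
    · rw [show lap m z' = 0 by simp [lap, hzt]] at hz'
      exact zero_ne_one hz'
    · have htr : 0 < z'.toReal := ENNReal.toReal_pos hz0 hzt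
      simp only [lap, if_neg hzt, ENNReal.ofReal_eq_one] at hz'
      have := (Real.exp_eq_one_iff _).1 hz'
      nlinarith
  intro l hl
  have hint : ∫⁻ z', lap l z' ∂μ = 1 := by
    have : (fun z' => lap l z') =ᵐ[μ] fun _ => (1 : ℝ≥0∞) := by
      filter_upwards [hae0] with z' hz'
      rw [hz']
      simp [lap]
    rw [lintegral_congr_ae this]
    simp
  rw [hlap t ht l hl.le 1] at hint
  simp only [lap, if_neg h1top, ENNReal.ofReal_eq_one] at hint
  have h2 := (Real.exp_eq_one_iff _).1 hint
  have h1 : (1 : E).toReal = 1 := by simp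
  rw [h1] at h2
  linarith [neg_eq_zero.1 h2]

/-- `u t l > 0` for all `t ≥ 0`, `l > 0`. -/
lemma key2 (P : ℝ → Kernel E E)
    (hmarkov : ∀ t, 0 ≤ t → IsMarkovKernel (P t))
    (u : ℝ → ℝ → ℝ)
    (hupos : ∀ t, 0 ≤ t → ∀ l, 0 ≤ l → 0 ≤ u t l)
    (hu0 : ∀ l, 0 ≤ l → u 0 l = l)
    (hcomp : ∀ t, 0 ≤ t → ∀ s, 0 ≤ s → ∀ l, 0 ≤ l → u (t + s) l = u t (u s l))
    (hcont : ∀ l, 0 ≤ l → ContinuousOn (fun t => u t l) (Ici (0 : ℝ)))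
    (hlap : ∀ t, 0 ≤ t → ∀ l, 0 ≤ l → ∀ z : E,
      ∫⁻ z', lap l z' ∂(P t z) = lap (u t l) z)
    {t l : ℝ} (ht : 0 ≤ t) (hl : 0 < l) : 0 < u t l := by
  rcases (hupos t ht l hl.le).lt_or_eq with h | h
  · exact h
  exfalso
  have h0 : u t l = 0 := h.symm
  -- halving
  have half : ∀ s, 0 ≤ s → u s l = 0 → u (s / 2) l = 0 := by
    intro s hs hsl
    have hs2 : 0 ≤ s / 2 := by linarith
    have hc : u s l = u (s / 2) (u (s / 2) l) := by
      have := hcomp (s / 2) hs2 (s / 2) hs2 l hl.le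
      rw [← this]; norm_num
    rcases (hupos (s / 2) hs2 l hl.le).lt_or_eq with hm | hm
    · exact key1 P hmarkov u hlap hs2 hm (by rw [← hc]; exact hsl) l hl
    · exact hm.symm
  have hn : ∀ n : ℕ, u (t / 2 ^ n) l = 0 := by
    intro n
    induction n with
    | zero => simpa using h0
    | succ n ih =>
      have := half (t / 2 ^ n) (div_nonneg ht (by positivity)) ih
      rwa [show t / 2 ^ n / 2 = t / 2 ^ (n + 1) by ring] at this
  -- the sequence t / 2^n tends to 0
  have hseq : Tendsto (fun n : ℕ => t / 2 ^ n) atTop (𝓝 0) := by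
    have h12 : Tendsto (fun n : ℕ => ((1 : ℝ) / 2) ^ n) atTop (𝓝 0) :=
      tendsto_pow_atTop_nhds_zero_of_lt_one (by norm_num) (by norm_num)
    have := h12.const_mul t
    simp only [mul_zero] at this
    convert this using 2 with n
    rw [div_eq_mul_inv, div_pow, one_pow, div_eq_mul_inv]
    ring
  have hseq' : Tendsto (fun n : ℕ => t / 2 ^ n) atTop (𝓝[Ici (0:ℝ)] 0) :=
    tendsto_nhdsWithin_of_tendsto_nhds_of_eventually_within _ hseq
      (Eventually.of_forall fun n => div_nonneg ht (by positivity))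
  have hcw : Tendsto (fun s => u s l) (𝓝[Ici (0:ℝ)] 0) (𝓝 l) := by
    have := hcont l hl.le 0 self_mem_Ici
    rw [ContinuousWithinAt, hu0 l hl.le] at this
    exact this
  have hlim : Tendsto (fun n : ℕ => u (t / 2 ^ n) l) atTop (𝓝 l) := hcw.comp hseq'
  have : (0 : ℝ) = l := by
    refine tendsto_nhds_unique ?_ hlim
    simp only [hn]
    exact tendsto_const_nhds
  linarith


lemma integral_eFun (P : ℝ → Kernel E E)
    (hmarkov : ∀ t, 0 ≤ t → IsMarkovKernel (P t))
    (u : ℝ → ℝ → ℝ)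
    (hlap : ∀ t, 0 ≤ t → ∀ l, 0 ≤ l → ∀ z : E,
      ∫⁻ z', lap l z' ∂(P t z) = lap (u t l) z)
    {t l : ℝ} (ht : 0 ≤ t) (hl : 0 < l) (z : E) :
    ∫ z', eFun l z' ∂(P t z) = eFun (u t l) z := by
  haveI := hmarkov t ht
  rw [integral_eq_lintegral_of_nonneg_ae (ae_of_all _ (eFun_nonneg l))
    ((continuous_eFun hl).aestronglyMeasurable)]
  simp_rw [← lap_eq_ofReal]
  rw [hlap t ht l hl.le z, ← eFun_eq_toReal]

lemma integrable_cm (μ : Measure E) [IsFiniteMeasure μ] (f : C(E, ℝ)) :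
    Integrable f μ := by
  have := (BoundedContinuousFunction.mkOfCompact f).integrable μ
  exact this

lemma integral_dist_le (μ : Measure E) [IsProbabilityMeasure μ] (f g : C(E, ℝ)) :
    dist (∫ z', f z' ∂μ) (∫ z', g z' ∂μ) ≤ dist f g := by
  rw [dist_eq_norm, ← integral_sub (integrable_cm μ f) (integrable_cm μ g)]
  calc ‖∫ z', (f z' - g z') ∂μ‖ ≤ dist f g * (μ univ).toReal := by
        apply norm_integral_le_of_norm_le_const
        exact ae_of_all _ fun z => by
          rw [Real.norm_eq_abs, ← Real.dist_eq]
          exact ContinuousMap.dist_apply_le_dist z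
    _ = dist f g := by simp

/-- The generating set of Laplace functions. -/
def S : Set C(E, ℝ) := {f : C(E, ℝ) | ∃ l : ℝ, 0 < l ∧ ⇑f = eFun l}

lemma Q_all (P : ℝ → Kernel E E)
    (hmarkov : ∀ t, 0 ≤ t → IsMarkovKernel (P t))
    (u : ℝ → ℝ → ℝ)
    (hupos : ∀ t, 0 ≤ t → ∀ l, 0 ≤ l → 0 ≤ u t l)
    (hu0 : ∀ l, 0 ≤ l → u 0 l = l)
    (hcomp : ∀ t, 0 ≤ t → ∀ s, 0 ≤ s → ∀ l, 0 ≤ l → u (t + s) l = u t (u s l))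
    (hcont : ∀ l, 0 ≤ l → ContinuousOn (fun t => u t l) (Ici (0 : ℝ)))
    (hlap : ∀ t, 0 ≤ t → ∀ l, 0 ≤ l → ∀ z : E,
      ∫⁻ z', lap l z' ∂(P t z) = lap (u t l) z)
    (f : C(E, ℝ)) (hf : f ∈ Algebra.adjoin ℝ S) :
    (∀ t, 0 ≤ t → Continuous fun z => ∫ z', f z' ∂(P t z)) ∧
      (∀ z : E, Tendsto (fun t => ∫ z', f z' ∂(P t z)) (𝓝[≥] (0:ℝ)) (𝓝 (f z))) := by
  have hf' : f ∈ Submodule.span ℝ ((Submonoid.closure S : Submonoid C(E, ℝ)) : Set C(E, ℝ)) := by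
    rw [← Algebra.adjoin_eq_span]
    exact hf
  -- Q for `1`
  have Q1 : (∀ t, 0 ≤ t → Continuous fun z => ∫ z', (1 : C(E, ℝ)) z' ∂(P t z)) ∧
      (∀ z : E, Tendsto (fun t => ∫ z', (1 : C(E, ℝ)) z' ∂(P t z)) (𝓝[≥] (0:ℝ))
        (𝓝 ((1 : C(E, ℝ)) z))) := by
    constructor
    · intro t ht
      haveI := hmarkov t ht
      have he : (fun z => ∫ z', (1 : C(E, ℝ)) z' ∂(P t z)) = fun _ => (1 : ℝ) :=
        funext fun z => by simp
      rw [he]; exact continuous_const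
    · intro z
      have h1 : Tendsto (fun _ : ℝ => (1 : ℝ)) (𝓝[≥] (0:ℝ)) (𝓝 ((1 : C(E, ℝ)) z)) := by
        simp only [ContinuousMap.one_apply]
        exact tendsto_const_nhds
      refine h1.congr' ?_
      filter_upwards [eventually_mem_nhdsWithin] with t ht
      haveI := hmarkov t ht
      simp
  -- Q for elements of S
  have QS : ∀ x : C(E, ℝ), x ∈ S →
      (∀ t, 0 ≤ t → Continuous fun z => ∫ z', x z' ∂(P t z)) ∧
      (∀ z : E, Tendsto (fun t => ∫ z', x z' ∂(P t z)) (𝓝[≥] (0:ℝ)) (𝓝 (x z))) := by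
    rintro x ⟨l, hl, hx⟩
    constructor
    · intro t ht
      have he : (fun z => ∫ z', x z' ∂(P t z)) = fun z => eFun (u t l) z :=
        funext fun z => by rw [hx]; exact integral_eFun P hmarkov u hlap ht hl z
      rw [he]
      exact continuous_eFun (key2 P hmarkov u hupos hu0 hcomp hcont hlap ht hl)
    · intro z
      have h1 : Tendsto (fun t => u t l) (𝓝[≥] (0:ℝ)) (𝓝 l) := by
        have := hcont l hl.le 0 self_mem_Ici
        rw [ContinuousWithinAt, hu0 l hl.le] at this
        exact this
      have h2 : Tendsto (fun t => eFun (u t l) z) (𝓝[≥] (0:ℝ)) (𝓝 (eFun l z)) :=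
        ((continuous_eFun_param z).tendsto l).comp h1
      have h3 : Tendsto (fun t => eFun (u t l) z) (𝓝[≥] (0:ℝ)) (𝓝 (x z)) := by
        rw [hx]; exact h2
      refine h3.congr' ?_
      filter_upwards [eventually_mem_nhdsWithin] with t ht
      rw [hx]
      exact (integral_eFun P hmarkov u hlap ht hl z).symm
  -- Q for elements of the monoid closure of S
  have Qclos : ∀ x : C(E, ℝ), x ∈ Submonoid.closure S →
      (∀ t, 0 ≤ t → Continuous fun z => ∫ z', x z' ∂(P t z)) ∧
      (∀ z : E, Tendsto (fun t => ∫ z', x z' ∂(P t z)) (𝓝[≥] (0:ℝ)) (𝓝 (x z))) := by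
    intro x hx
    have hmem : x = 1 ∨ x ∈ S := by
      induction hx using Submonoid.closure_induction with
      | mem y hy => exact Or.inr hy
      | one => exact Or.inl rfl
      | mul y w hy hw ihy ihw =>
        rcases ihy with rfl | ⟨ly, hly, hy'⟩
        · rcases ihw with rfl | hw'
          · exact Or.inl (one_mul 1)
          · rw [one_mul]; exact Or.inr hw'
        · rcases ihw with rfl | ⟨lw, hlw, hw'⟩
          · rw [mul_one]; exact Or.inr ⟨ly, hly, hy'⟩
          · refine Or.inr ⟨ly + lw, by linarith, ?_⟩
            funext z
            rw [ContinuousMap.mul_apply, hy', hw', eFun_mul]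
    rcases hmem with rfl | hxS
    · exact Q1
    · exact QS x hxS
  -- span induction
  refine Submodule.span_induction (fun x hx => Qclos x hx) ?_ ?_ ?_ hf'
  · constructor
    · intro t ht
      have he : (fun z => ∫ z', (0 : C(E, ℝ)) z' ∂(P t z)) = fun _ => (0 : ℝ) :=
        funext fun z => by simp
      rw [he]; exact continuous_const
    · intro z
      simp only [ContinuousMap.zero_apply, integral_zero]
      exact tendsto_const_nhds
  · rintro x y hx hy ⟨hxc, hxt⟩ ⟨hyc, hyt⟩
    have he : ∀ t, 0 ≤ t → ∀ z : E, ∫ z', (x + y) z' ∂(P t z)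
        = (∫ z', x z' ∂(P t z)) + ∫ z', y z' ∂(P t z) := by
      intro t ht z
      haveI := hmarkov t ht
      simp only [ContinuousMap.add_apply]
      exact integral_add (integrable_cm _ x) (integrable_cm _ y)
    constructor
    · intro t ht
      have h := (hxc t ht).add (hyc t ht)
      refine h.congr fun z => ?_
      exact (he t ht z).symm
    · intro z
      have h := (hxt z).add (hyt z)
      rw [← ContinuousMap.add_apply] at h
      refine h.congr' ?_
      filter_upwards [eventually_mem_nhdsWithin] with t ht
      exact (he t ht z).symm
  · rintro a x hx ⟨hxc, hxt⟩
    have he : ∀ z : E, ∀ t : ℝ, ∫ z', (a • x) z' ∂(P t z) = a * ∫ z', x z' ∂(P t z) := by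
      intro z t
      simp only [ContinuousMap.coe_smul, Pi.smul_apply, smul_eq_mul]
      rw [integral_const_mul]
    constructor
    · intro t ht
      exact (continuous_const.mul (hxc t ht)).congr fun z => (he z t).symm
    · intro z
      have h := (hxt z).const_mul a
      have h2 : Tendsto (fun t => a * ∫ z', x z' ∂(P t z)) (𝓝[≥] (0:ℝ)) (𝓝 ((a • x) z)) := by
        simpa [ContinuousMap.coe_smul, Pi.smul_apply, smul_eq_mul] using h
      refine h2.congr' ?_
      filter_upwards [] with t
      exact (he z t).symm

end CSBPAux

open CSBPAux in
/-- **The semigroup of a CSBP is Feller** on `E = [0,∞]` (which is homeomorphic to `[0,1]`):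
given the Laplace representation `∫ e^{-λz'} P_t(z,dz') = e^{-z u_t(λ)}` with `u_0(λ) = λ`,
the composition rule and continuity of `t ↦ u_t(λ)`, for every continuous `g : E → ℝ` the
function `P_t g` is continuous, and `P_t g → g` pointwise as `t → 0⁺`. -/
theorem csbp_feller
    (P : ℝ → Kernel E E)
    (hmarkov : ∀ t, 0 ≤ t → IsMarkovKernel (P t))
    (u : ℝ → ℝ → ℝ)
    (hupos : ∀ t, 0 ≤ t → ∀ l, 0 ≤ l → 0 ≤ u t l)
    (hu0 : ∀ l, 0 ≤ l → u 0 l = l)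
    (hcomp : ∀ t, 0 ≤ t → ∀ s, 0 ≤ s → ∀ l, 0 ≤ l → u (t + s) l = u t (u s l))
    (hcont : ∀ l, 0 ≤ l → ContinuousOn (fun t => u t l) (Ici (0 : ℝ)))
    (hlap : ∀ t, 0 ≤ t → ∀ l, 0 ≤ l → ∀ z : E,
      ∫⁻ z', lap l z' ∂(P t z) = lap (u t l) z) :
    ∀ g : E → ℝ, Continuous g →
      (∀ t, 0 ≤ t → Continuous fun z => ∫ z', g z' ∂(P t z)) ∧
      (∀ z : E, Tendsto (fun t => ∫ z', g z' ∂(P t z))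
        (nhdsWithin 0 (Ici 0)) (nhds (g z))) := by
  intro g hg
  set G : C(E, ℝ) := ⟨g, hg⟩ with hGdef
  set A : Subalgebra ℝ C(E, ℝ) := Algebra.adjoin ℝ CSBPAux.S with hA
  have hsep : A.SeparatesPoints := by
    intro x y hxy
    refine ⟨_, Set.mem_image_of_mem _
      (Algebra.subset_adjoin (⟨1, one_pos, rfl⟩ :
        (⟨eFun 1, continuous_eFun one_pos⟩ : C(E, ℝ)) ∈ CSBPAux.S)), ?_⟩
    exact fun h => hxy (eFun_injective one_pos h)
  have hdense : A.topologicalClosure = ⊤ :=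
    ContinuousMap.subalgebra_topologicalClosure_eq_top_of_separatesPoints A hsep
  have hG : G ∈ closure (A : Set C(E, ℝ)) := by
    rw [← Subalgebra.topologicalClosure_coe, hdense]
    simp
  have happrox : ∀ ε > (0 : ℝ), ∃ f ∈ A, dist G f < ε := by
    intro ε hε
    obtain ⟨f, hfA, hf⟩ := Metric.mem_closure_iff.1 hG ε hε
    exact ⟨f, hfA, hf⟩
  have hQ := fun (f : C(E, ℝ)) (hf : f ∈ A) =>
    Q_all P hmarkov u hupos hu0 hcomp hcont hlap f hf
  constructor
  · -- continuity in z
    intro t ht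
    haveI := hmarkov t ht
    have hex : ∀ n : ℕ, ∃ f ∈ A, dist G f < 1 / (n + 1) := fun n =>
      happrox _ (by positivity)
    choose fs hfsA hfs using hex
    have hunif : TendstoUniformly (fun n z => ∫ z', fs n z' ∂(P t z))
        (fun z => ∫ z', g z' ∂(P t z)) atTop := by
      rw [Metric.tendstoUniformly_iff]
      intro ε hε
      obtain ⟨N, hN⟩ := exists_nat_one_div_lt hε
      filter_upwards [eventually_ge_atTop N] with n hn z
      have h1 : dist (∫ z', g z' ∂(P t z)) (∫ z', fs n z' ∂(P t z)) ≤ dist G (fs n) :=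
        integral_dist_le (P t z) G (fs n)
      have h2 : (1 : ℝ) / (n + 1) ≤ 1 / (N + 1) := by
        apply one_div_le_one_div_of_le
        · positivity
        · have : (N : ℝ) ≤ n := Nat.cast_le.2 hn
          linarith
      calc dist (∫ z', g z' ∂(P t z)) (∫ z', fs n z' ∂(P t z))
          ≤ dist G (fs n) := h1
        _ < 1 / (n + 1) := hfs n
        _ ≤ 1 / (N + 1) := h2
        _ < ε := hN
    exact hunif.continuous (Eventually.of_forall fun n => (hQ (fs n) (hfsA n)).1 t ht).frequently
  · -- pointwise convergence in t
    intro z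
    rw [Metric.tendsto_nhds]
    intro ε hε
    obtain ⟨f, hfA, hf⟩ := happrox (ε / 3) (by linarith)
    have h2 := (hQ f hfA).2 z
    rw [Metric.tendsto_nhds] at h2
    filter_upwards [h2 (ε / 3) (by linarith), eventually_mem_nhdsWithin] with t h2t ht
    haveI := hmarkov t ht
    have hint : dist (∫ z', g z' ∂(P t z)) (∫ z', f z' ∂(P t z)) ≤ dist G f :=
      integral_dist_le (P t z) G f
    have hpt : dist (f z) (g z) ≤ dist G f := by
      rw [dist_comm]
      exact ContinuousMap.dist_apply_le_dist (f := G) (g := f) z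
    calc dist (∫ z', g z' ∂(P t z)) (g z)
        ≤ dist (∫ z', g z' ∂(P t z)) (∫ z', f z' ∂(P t z)) + dist (∫ z', f z' ∂(P t z)) (f z)
          + dist (f z) (g z) := dist_triangle4 _ _ _ _
      _ < ε / 3 + ε / 3 + ε / 3 := by
          refine add_lt_add (add_lt_add_of_le_of_lt (lt_of_le_of_lt hint hf).le h2t) ?_
          exact lt_of_le_of_lt hpt hf
      _ = ε := by ring


end
end

section
/- Suppose (u_t)_{t≥0} is a family of functions on (0,∞), each strictly increasing and differentiable in λ, satisfying u_0 = id, the composition rule u_{t+s}(λ) = u_t(u_s(λ)), continuity of t ↦ u_t(λ), and u_t(λ) ≠ λ for t > 0 (nontrivial case). Then t ↦ u_t(λ) is differentiable on [0,∞) and ∂_t u_t(λ) = F(u_t(λ)), where F(λ) := ∂_t u_t(λ)|_{t=0}. -/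
open Filter Set Topology MeasureTheory

/-- The time-flow `t ↦ u t l`, clamped at `0` so that it is defined (and monotone) on all
of `ℝ`. -/
private def phiC (u : ℝ → ℝ → ℝ) (l : ℝ) (t : ℝ) : ℝ := u (max t 0) l

/-- `l` is *good* if `s ↦ u s l` has a right derivative at `0`. -/
private def Good (u : ℝ → ℝ → ℝ) (l : ℝ) : Prop :=
  ∃ d, HasDerivWithinAt (fun h => u h l) d (Ici (0 : ℝ)) 0

private lemma exists_diffpt (f : ℝ → ℝ) (hf : Monotone f ∨ Antitone f) (c : ℝ) (hc : 0 < c) :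
    ∃ t₀ ∈ Ioo (0 : ℝ) c, DifferentiableAt ℝ f t₀ := by
  have hae : ∀ᵐ x, DifferentiableAt ℝ f x := by
    rcases hf with h | h
    · exact h.ae_differentiableAt
    · have hm : Monotone (fun t => -f t) := fun x y hxy => neg_le_neg (h hxy)
      filter_upwards [hm.ae_differentiableAt] with x hx
      have hfx : f = fun t => -(-f t) := by funext t; ring
      rw [hfx]; exact hx.neg
  by_contra hcon
  push_neg at hcon
  have hsub : Ioo (0 : ℝ) c ⊆ {x | ¬ DifferentiableAt ℝ f x} := fun x hx => hcon x hx
  have h0 : volume (Ioo (0 : ℝ) c) = 0 := measure_mono_null hsub (ae_iff.mp hae)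
  rw [Real.volume_Ioo] at h0
  simp [ENNReal.ofReal_eq_zero] at h0
  linarith

private lemma flow_step (u : ℝ → ℝ → ℝ)
    (hcomp : ∀ t ≥ 0, ∀ s ≥ 0, ∀ l > (0 : ℝ), u (t + s) l = u t (u s l))
    (l : ℝ) (hl : 0 < l) :
    ∀ s t : ℝ, s ≤ t → phiC u l t = phiC u l s ∨
      (0 < max t 0 - max s 0 ∧ phiC u l t = u (max t 0 - max s 0) (phiC u l s)) := by
  intro s t hst
  rcases eq_or_lt_of_le (max_le_max_right (0:ℝ) hst : max s 0 ≤ max t 0) with heq | hlt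
  · left; simp only [phiC, ← heq]
  · right
    refine ⟨by linarith, ?_⟩
    have h1 : (0:ℝ) ≤ max t 0 - max s 0 := by linarith
    have := hcomp (max t 0 - max s 0) h1 (max s 0) (le_max_right _ _) l hl
    rw [sub_add_cancel] at this
    exact this

private lemma mono_pos (u : ℝ → ℝ → ℝ)
    (hpos : ∀ t ≥ 0, ∀ l > (0 : ℝ), 0 < u t l)
    (hcomp : ∀ t ≥ 0, ∀ s ≥ 0, ∀ l > (0 : ℝ), u (t + s) l = u t (u s l))
    (hsignp : ∀ h > (0 : ℝ), ∀ l > (0 : ℝ), l < u h l)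
    (l : ℝ) (hl : 0 < l) : Monotone (phiC u l) := by
  intro s t hst
  rcases flow_step u hcomp l hl s t hst with h | ⟨hlt, h⟩
  · rw [h]
  · rw [h]
    exact (hsignp _ hlt _ (hpos _ (le_max_right _ _) l hl)).le

private lemma anti_neg (u : ℝ → ℝ → ℝ)
    (hpos : ∀ t ≥ 0, ∀ l > (0 : ℝ), 0 < u t l)
    (hcomp : ∀ t ≥ 0, ∀ s ≥ 0, ∀ l > (0 : ℝ), u (t + s) l = u t (u s l))
    (hsignn : ∀ h > (0 : ℝ), ∀ l > (0 : ℝ), u h l < l)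
    (l : ℝ) (hl : 0 < l) : Antitone (phiC u l) := by
  intro s t hst
  rcases flow_step u hcomp l hl s t hst with h | ⟨hlt, h⟩
  · rw [h]
  · rw [h]
    exact (hsignn _ hlt _ (hpos _ (le_max_right _ _) l hl)).le

private lemma mono_or_anti (u : ℝ → ℝ → ℝ)
    (hpos : ∀ t ≥ 0, ∀ l > (0 : ℝ), 0 < u t l)
    (hcomp : ∀ t ≥ 0, ∀ s ≥ 0, ∀ l > (0 : ℝ), u (t + s) l = u t (u s l))
    (hsign : (∀ h > (0 : ℝ), ∀ l > (0 : ℝ), l < u h l) ∨ (∀ h > (0 : ℝ), ∀ l > (0 : ℝ), u h l < l))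
    (l : ℝ) (hl : 0 < l) : Monotone (phiC u l) ∨ Antitone (phiC u l) := by
  rcases hsign with hs | hs
  · exact Or.inl (mono_pos u hpos hcomp hs l hl)
  · exact Or.inr (anti_neg u hpos hcomp hs l hl)

private lemma sign_dic (u : ℝ → ℝ → ℝ)
    (hdiff : ∀ t ≥ 0, ∀ l > (0 : ℝ), DifferentiableAt ℝ (u t) l)
    (hcont : ∀ l > (0 : ℝ), ContinuousOn (fun t => u t l) (Ici (0 : ℝ)))
    (hnontriv : ∀ t > (0 : ℝ), ∀ l > (0 : ℝ), u t l ≠ l) :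
    (∀ h > (0 : ℝ), ∀ l > (0 : ℝ), l < u h l) ∨ (∀ h > (0 : ℝ), ∀ l > (0 : ℝ), u h l < l) := by
  -- per-λ dichotomy
  have claim1 : ∀ l > (0 : ℝ), (∀ h > (0 : ℝ), l < u h l) ∨ (∀ h > (0 : ℝ), u h l < l) := by
    intro l hl
    by_contra hc
    push_neg at hc
    obtain ⟨⟨h₁, h₁pos, hle₁⟩, ⟨h₂, h₂pos, hle₂⟩⟩ := hc
    have hlt₁ : u h₁ l < l := lt_of_le_of_ne hle₁ (hnontriv h₁ h₁pos l hl)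
    have hlt₂ : l < u h₂ l := lt_of_le_of_ne hle₂ (Ne.symm (hnontriv h₂ h₂pos l hl))
    rcases le_total h₁ h₂ with hh | hh
    · have hsub : Icc h₁ h₂ ⊆ Ici (0:ℝ) := fun x hx => le_trans h₁pos.le hx.1
      have := intermediate_value_Icc hh ((hcont l hl).mono hsub)
        (⟨hlt₁.le, hlt₂.le⟩ : l ∈ Icc (u h₁ l) (u h₂ l))
      obtain ⟨ts, hts, heq⟩ := this
      exact hnontriv ts (lt_of_lt_of_le h₁pos hts.1) l hl heq
    · have hsub : Icc h₂ h₁ ⊆ Ici (0:ℝ) := fun x hx => le_trans h₂pos.le hx.1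
      have := intermediate_value_Icc' hh ((hcont l hl).mono hsub)
        (⟨hlt₁.le, hlt₂.le⟩ : l ∈ Icc (u h₁ l) (u h₂ l))
      obtain ⟨ts, hts, heq⟩ := this
      exact hnontriv ts (lt_of_lt_of_le h₂pos hts.1) l hl heq
  by_cases hex : ∃ h > (0:ℝ), ∃ l > (0:ℝ), l < u h l
  · obtain ⟨h₁, h₁pos, l₁, hl₁, hlt₁⟩ := hex
    have hleft₁ : ∀ h > (0:ℝ), l₁ < u h l₁ := by
      rcases claim1 l₁ hl₁ with h | h
      · exact h
      · exact absurd hlt₁ (not_lt.mpr (h h₁ h₁pos).le)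
    left
    intro h hh l hl
    rcases claim1 l hl with hgood | hbad
    · exact hgood h hh
    · exfalso
      -- IVT in λ at time 1 between l and l₁
      have hvl : u 1 l - l < 0 := sub_neg.mpr (hbad 1 one_pos)
      have hvl₁ : 0 < u 1 l₁ - l₁ := sub_pos.mpr (hleft₁ 1 one_pos)
      rcases le_total l l₁ with hll | hll
      · have hsub : Icc l l₁ ⊆ Ioi (0:ℝ) := fun x hx => lt_of_lt_of_le hl hx.1
        have hcu : ContinuousOn (fun x => u 1 x - x) (Icc l l₁) :=
          ContinuousOn.sub (fun x hx =>
            ((hdiff 1 zero_le_one x (hsub hx)).continuousAt).continuousWithinAt)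
            continuousOn_id
        obtain ⟨x, hx, hx0⟩ := intermediate_value_Icc hll hcu
          (⟨hvl.le, hvl₁.le⟩ : (0:ℝ) ∈ Icc (u 1 l - l) (u 1 l₁ - l₁))
        exact hnontriv 1 one_pos x (lt_of_lt_of_le hl hx.1) (by linarith [sub_eq_zero.mp hx0])
      · have hsub : Icc l₁ l ⊆ Ioi (0:ℝ) := fun x hx => lt_of_lt_of_le hl₁ hx.1
        have hcu : ContinuousOn (fun x => u 1 x - x) (Icc l₁ l) :=
          ContinuousOn.sub (fun x hx =>
            ((hdiff 1 zero_le_one x (hsub hx)).continuousAt).continuousWithinAt)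
            continuousOn_id
        obtain ⟨x, hx, hx0⟩ := intermediate_value_Icc' hll hcu
          (⟨hvl.le, hvl₁.le⟩ : (0:ℝ) ∈ Icc (u 1 l - l) (u 1 l₁ - l₁))
        exact hnontriv 1 one_pos x (lt_of_lt_of_le hl₁ hx.1) (by linarith [sub_eq_zero.mp hx0])
  · push_neg at hex
    right
    intro h hh l hl
    exact lt_of_le_of_ne (hex h hh l hl) (hnontriv h hh l hl)

private lemma good_of_diffAt (u : ℝ → ℝ → ℝ)
    (hpos : ∀ t ≥ 0, ∀ l > (0 : ℝ), 0 < u t l)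
    (hu0 : ∀ l > (0 : ℝ), u 0 l = l)
    (hcomp : ∀ t ≥ 0, ∀ s ≥ 0, ∀ l > (0 : ℝ), u (t + s) l = u t (u s l))
    (l : ℝ) (hl : 0 < l) (t₀ : ℝ) (ht₀ : 0 < t₀)
    (hd : DifferentiableAt ℝ (phiC u l) t₀) : Good u (u t₀ l) := by
  refine ⟨deriv (phiC u l) t₀, ?_⟩
  have h1 : HasDerivAt (fun h => phiC u l (h + t₀)) (deriv (phiC u l) t₀) 0 := by
    have hin : HasDerivAt (fun h : ℝ => h + t₀) 1 0 := (hasDerivAt_id (0:ℝ)).add_const t₀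
    have hout : HasDerivAt (phiC u l) (deriv (phiC u l) t₀) ((fun h : ℝ => h + t₀) 0) := by
      simpa using hd.hasDerivAt
    simpa [Function.comp_def] using hout.comp 0 hin
  have h2 := h1.hasDerivWithinAt (s := Ici (0:ℝ))
  refine h2.congr (fun h hh => ?_) ?_
  · have hh0 : (0:ℝ) ≤ h := hh
    have := hcomp h hh0 t₀ ht₀.le l hl
    simp only [phiC, max_eq_left (by linarith : (0:ℝ) ≤ h + t₀)]
    exact this.symm
  · simp only [phiC, zero_add, max_eq_left ht₀.le]
    exact hu0 _ (hpos t₀ ht₀.le l hl)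

private lemma good_flow (u : ℝ → ℝ → ℝ)
    (hpos : ∀ t ≥ 0, ∀ l > (0 : ℝ), 0 < u t l)
    (hdiff : ∀ t ≥ 0, ∀ l > (0 : ℝ), DifferentiableAt ℝ (u t) l)
    (hu0 : ∀ l > (0 : ℝ), u 0 l = l)
    (hcomp : ∀ t ≥ 0, ∀ s ≥ 0, ∀ l > (0 : ℝ), u (t + s) l = u t (u s l))
    (l : ℝ) (hl : 0 < l) (hg : Good u l) (s : ℝ) (hs : 0 ≤ s) : Good u (u s l) := by
  obtain ⟨d, hd⟩ := hg
  have hf0 : (fun h => u h l) 0 = l := hu0 l hl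
  have hout : HasDerivAt (u s) (deriv (u s) ((fun h => u h l) 0)) ((fun h => u h l) 0) := by
    rw [hf0]
    exact (hdiff s hs l hl).hasDerivAt
  have hcompd := hout.comp_hasDerivWithinAt 0 hd
  refine ⟨deriv (u s) ((fun h => u h l) 0) * d, hcompd.congr (fun h hh => ?_) ?_⟩
  · have hh0 : (0:ℝ) ≤ h := hh
    have e1 : u (h + s) l = u h (u s l) := hcomp h hh0 s hs l hl
    have e2 : u (s + h) l = u s (u h l) := hcomp s hs h hh0 l hl
    simp only [Function.comp]
    rw [← e2, add_comm s h, e1]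
  · simp only [Function.comp, hf0]
    exact hu0 _ (hpos s hs l hl)
private lemma reach_pos (u : ℝ → ℝ → ℝ)
    (hpos : ∀ t ≥ 0, ∀ l > (0 : ℝ), 0 < u t l)
    (hdiff : ∀ t ≥ 0, ∀ l > (0 : ℝ), DifferentiableAt ℝ (u t) l)
    (hu0 : ∀ l > (0 : ℝ), u 0 l = l)
    (hcomp : ∀ t ≥ 0, ∀ s ≥ 0, ∀ l > (0 : ℝ), u (t + s) l = u t (u s l))
    (hcont : ∀ l > (0 : ℝ), ContinuousOn (fun t => u t l) (Ici (0 : ℝ)))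
    (hnontriv : ∀ t > (0 : ℝ), ∀ l > (0 : ℝ), u t l ≠ l)
    (hsignp : ∀ h > (0 : ℝ), ∀ l > (0 : ℝ), l < u h l)
    (l : ℝ) (hl : 0 < l)
    (hm : Monotone (phiC u (l/2))) : ∃ ts > (0:ℝ), u ts (l/2) = l := by
  set l₁ := l/2 with hl₁def
  have hl₁ : 0 < l₁ := by positivity
  have hl₁l : l₁ < l := by simp only [hl₁def]; linarith
  -- step 1 : the flow exceeds l at some time
  have hT : ∃ T ≥ (0:ℝ), l < u T l₁ := by
    by_contra hc
    push_neg at hc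
    have hbdd : BddAbove (range (phiC u l₁)) :=
      ⟨l, by rintro x ⟨t, rfl⟩; exact hc _ (le_max_right _ _)⟩
    set L := ⨆ t : ℝ, phiC u l₁ t with hLdef
    have htend : Tendsto (phiC u l₁) atTop (𝓝 L) := tendsto_atTop_ciSup hm hbdd
    have hL0 : 0 < L := lt_of_lt_of_le (hpos 0 le_rfl l₁ hl₁ |>.trans_le (le_of_eq rfl))
      (by simpa [phiC] using le_ciSup hbdd (0:ℝ))
    have htend2 : Tendsto (fun t => u 1 (phiC u l₁ t)) atTop (𝓝 (u 1 L)) :=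
      ((hdiff 1 zero_le_one L hL0).continuousAt.tendsto).comp htend
    have htend3 : Tendsto (fun t => phiC u l₁ (t + 1)) atTop (𝓝 L) :=
      htend.comp (tendsto_atTop_add_const_right _ 1 tendsto_id)
    have heq : (fun t => u 1 (phiC u l₁ t)) =ᶠ[atTop] (fun t => phiC u l₁ (t + 1)) := by
      filter_upwards [eventually_ge_atTop (0:ℝ)] with t ht
      have h1 : max t 0 = t := max_eq_left ht
      have h2 : max (t+1) 0 = t + 1 := max_eq_left (by linarith)
      simp only [phiC, h1, h2]
      rw [add_comm t 1, hcomp 1 zero_le_one t ht l₁ hl₁]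
    have : u 1 L = L := tendsto_nhds_unique (htend2.congr' heq) htend3
    exact hnontriv 1 one_pos L hL0 this
  obtain ⟨T, hT0, hTl⟩ := hT
  -- step 2 : IVT
  have hcu : ContinuousOn (phiC u l₁) (Icc 0 T) := by
    refine ((hcont l₁ hl₁).mono (Icc_subset_Ici_self)).congr ?_
    intro t ht
    simp [phiC, max_eq_left ht.1]
  have hmem : l ∈ Icc (phiC u l₁ 0) (phiC u l₁ T) := by
    constructor
    · simp only [phiC, max_self]
      rw [hu0 l₁ hl₁]
      exact hl₁l.le
    · simp only [phiC, max_eq_left hT0]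
      exact hTl.le
  obtain ⟨ts, hts, htseq⟩ := intermediate_value_Icc hT0 hcu hmem
  have hts0 : 0 < ts := by
    rcases eq_or_lt_of_le hts.1 with h | h
    · exfalso
      rw [← h] at htseq
      simp only [phiC, max_self] at htseq
      rw [hu0 l₁ hl₁] at htseq
      linarith
    · exact h
  refine ⟨ts, hts0, ?_⟩
  simpa [phiC, max_eq_left hts.1] using htseq

private lemma reach_neg (u : ℝ → ℝ → ℝ)
    (hpos : ∀ t ≥ 0, ∀ l > (0 : ℝ), 0 < u t l)
    (hdiff : ∀ t ≥ 0, ∀ l > (0 : ℝ), DifferentiableAt ℝ (u t) l)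
    (hu0 : ∀ l > (0 : ℝ), u 0 l = l)
    (hcomp : ∀ t ≥ 0, ∀ s ≥ 0, ∀ l > (0 : ℝ), u (t + s) l = u t (u s l))
    (hcont : ∀ l > (0 : ℝ), ContinuousOn (fun t => u t l) (Ici (0 : ℝ)))
    (hnontriv : ∀ t > (0 : ℝ), ∀ l > (0 : ℝ), u t l ≠ l)
    (hsignn : ∀ h > (0 : ℝ), ∀ l > (0 : ℝ), u h l < l)
    (l : ℝ) (hl : 0 < l)
    (hm : Antitone (phiC u (l+1))) : ∃ ts > (0:ℝ), u ts (l+1) = l := by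
  set l₁ := l+1 with hl₁def
  have hl₁ : 0 < l₁ := by positivity
  have hl₁l : l < l₁ := by simp only [hl₁def]; linarith
  have hT : ∃ T ≥ (0:ℝ), u T l₁ < l := by
    by_contra hc
    push_neg at hc
    have hbdd : BddBelow (range (phiC u l₁)) :=
      ⟨l, by rintro x ⟨t, rfl⟩; exact hc _ (le_max_right _ _)⟩
    set L := ⨅ t : ℝ, phiC u l₁ t with hLdef
    have htend : Tendsto (phiC u l₁) atTop (𝓝 L) := tendsto_atTop_ciInf hm hbdd
    have hL0 : 0 < L := lt_of_lt_of_le hl (le_ciInf (fun t => hc _ (le_max_right _ _)))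
    have htend2 : Tendsto (fun t => u 1 (phiC u l₁ t)) atTop (𝓝 (u 1 L)) :=
      ((hdiff 1 zero_le_one L hL0).continuousAt.tendsto).comp htend
    have htend3 : Tendsto (fun t => phiC u l₁ (t + 1)) atTop (𝓝 L) :=
      htend.comp (tendsto_atTop_add_const_right _ 1 tendsto_id)
    have heq : (fun t => u 1 (phiC u l₁ t)) =ᶠ[atTop] (fun t => phiC u l₁ (t + 1)) := by
      filter_upwards [eventually_ge_atTop (0:ℝ)] with t ht
      have h1 : max t 0 = t := max_eq_left ht
      have h2 : max (t+1) 0 = t + 1 := max_eq_left (by linarith)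
      simp only [phiC, h1, h2]
      rw [add_comm t 1, hcomp 1 zero_le_one t ht l₁ hl₁]
    have : u 1 L = L := tendsto_nhds_unique (htend2.congr' heq) htend3
    exact hnontriv 1 one_pos L hL0 this
  obtain ⟨T, hT0, hTl⟩ := hT
  have hcu : ContinuousOn (phiC u l₁) (Icc 0 T) := by
    refine ((hcont l₁ hl₁).mono (Icc_subset_Ici_self)).congr ?_
    intro t ht
    simp [phiC, max_eq_left ht.1]
  have hmem : l ∈ Icc (phiC u l₁ T) (phiC u l₁ 0) := by
    constructor
    · simp only [phiC, max_eq_left hT0]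
      exact hTl.le
    · simp only [phiC, max_self]
      rw [hu0 l₁ hl₁]
      exact hl₁l.le
  obtain ⟨ts, hts, htseq⟩ := intermediate_value_Icc' hT0 hcu hmem
  have hts0 : 0 < ts := by
    rcases eq_or_lt_of_le hts.1 with h | h
    · exfalso
      rw [← h] at htseq
      simp only [phiC, max_self] at htseq
      rw [hu0 l₁ hl₁] at htseq
      linarith
    · exact h
  refine ⟨ts, hts0, ?_⟩
  simpa [phiC, max_eq_left hts.1] using htseq

private lemma all_good (u : ℝ → ℝ → ℝ)
    (hpos : ∀ t ≥ 0, ∀ l > (0 : ℝ), 0 < u t l)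
    (hdiff : ∀ t ≥ 0, ∀ l > (0 : ℝ), DifferentiableAt ℝ (u t) l)
    (hu0 : ∀ l > (0 : ℝ), u 0 l = l)
    (hcomp : ∀ t ≥ 0, ∀ s ≥ 0, ∀ l > (0 : ℝ), u (t + s) l = u t (u s l))
    (hcont : ∀ l > (0 : ℝ), ContinuousOn (fun t => u t l) (Ici (0 : ℝ)))
    (hnontriv : ∀ t > (0 : ℝ), ∀ l > (0 : ℝ), u t l ≠ l)
    (l : ℝ) (hl : 0 < l) : Good u l := by
  have hsign := sign_dic u hdiff hcont hnontriv
  have hreach : ∃ l₁ > (0:ℝ), ∃ ts > (0:ℝ), u ts l₁ = l := by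
    rcases hsign with hs | hs
    · obtain ⟨ts, hts, heq⟩ := reach_pos u hpos hdiff hu0 hcomp hcont hnontriv hs l hl
        (mono_pos u hpos hcomp hs (l/2) (by positivity))
      exact ⟨l/2, by positivity, ts, hts, heq⟩
    · obtain ⟨ts, hts, heq⟩ := reach_neg u hpos hdiff hu0 hcomp hcont hnontriv hs l hl
        (anti_neg u hpos hcomp hs (l+1) (by positivity))
      exact ⟨l+1, by positivity, ts, hts, heq⟩
  obtain ⟨l₁, hl₁, ts, hts, heq⟩ := hreach
  obtain ⟨t₀, ht₀, hdm⟩ := exists_diffpt (phiC u l₁)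
    (mono_or_anti u hpos hcomp hsign l₁ hl₁) ts hts
  have hg1 : Good u (u t₀ l₁) := good_of_diffAt u hpos hu0 hcomp l₁ hl₁ t₀ ht₀.1 hdm
  have hg2 : Good u (u (ts - t₀) (u t₀ l₁)) :=
    good_flow u hpos hdiff hu0 hcomp (u t₀ l₁) (hpos t₀ ht₀.1.le l₁ hl₁) hg1
      (ts - t₀) (by linarith [ht₀.2])
  have hkey : u (ts - t₀) (u t₀ l₁) = l := by
    rw [← hcomp (ts - t₀) (by linarith [ht₀.2]) t₀ ht₀.1.le l₁ hl₁, sub_add_cancel, heq]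
  rwa [hkey] at hg2

/-- **Differentiability of the cumulant semigroup of a CSBP.**
If `(u_t)` is a family of strictly increasing, differentiable functions on `(0,∞)` with
`u_0 = id`, the composition rule `u_{t+s} = u_t ∘ u_s`, continuity in `t`, and `u_t(λ) ≠ λ`
for `t > 0`, then `t ↦ u_t(λ)` is differentiable on `[0,∞)` and `∂_t u_t(λ) = F(u_t(λ))`,
where `F(λ) = ∂_t u_t(λ)|_{t=0}` (which is exactly the `t = 0` case of the conclusion,
since `u_0(λ) = λ`). -/
theorem cumulant_semigroup_differentiable
    (u : ℝ → ℝ → ℝ)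
    (hpos : ∀ t ≥ 0, ∀ l > (0 : ℝ), 0 < u t l)
    (hmono : ∀ t ≥ 0, StrictMonoOn (u t) (Ioi (0 : ℝ)))
    (hdiff : ∀ t ≥ 0, ∀ l > (0 : ℝ), DifferentiableAt ℝ (u t) l)
    (hu0 : ∀ l > (0 : ℝ), u 0 l = l)
    (hcomp : ∀ t ≥ 0, ∀ s ≥ 0, ∀ l > (0 : ℝ), u (t + s) l = u t (u s l))
    (hcont : ∀ l > (0 : ℝ), ContinuousOn (fun t => u t l) (Ici (0 : ℝ)))
    (hnontriv : ∀ t > (0 : ℝ), ∀ l > (0 : ℝ), u t l ≠ l) :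
    ∃ F : ℝ → ℝ, ∀ l > (0 : ℝ), ∀ t ≥ 0,
      HasDerivWithinAt (fun s => u s l) (F (u t l)) (Ici (0 : ℝ)) t := by
  classical
  have hsign := sign_dic u hdiff hcont hnontriv
  have main : ∀ l > (0:ℝ), Good u l := all_good u hpos hdiff hu0 hcomp hcont hnontriv
  set F : ℝ → ℝ := fun m => if h : Good u m then h.choose else 0 with hFdef
  have hF : ∀ m, 0 < m → HasDerivWithinAt (fun h => u h m) (F m) (Ici (0:ℝ)) 0 := by
    intro m hm
    have hg := main m hm
    have hFm : F m = hg.choose := by simp only [hFdef, dif_pos hg]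
    rw [hFm]
    exact hg.choose_spec
  refine ⟨F, fun l hl t ht => ?_⟩
  have hμ : 0 < u t l := hpos t ht l hl
  have h0 : HasDerivWithinAt (fun h => u h (u t l)) (F (u t l)) (Ici (0:ℝ)) 0 := hF _ hμ
  rcases eq_or_lt_of_le ht with hteq | htpos
  · -- t = 0
    subst hteq
    simp only [hu0 l hl] at h0 ⊢
    exact h0
  · -- t > 0
    -- right-derivative version at t, obtained by shifting `h0`
    have hshift : HasDerivWithinAt (fun s => u s l) (F (u t l)) (Ici t) t := by
      have hinner : HasDerivWithinAt (fun s : ℝ => s - t) 1 (Ici t) t :=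
        ((hasDerivAt_id t).sub_const t).hasDerivWithinAt
      have hmaps : MapsTo (fun s : ℝ => s - t) (Ici t) (Ici (0:ℝ)) := fun s hs => by
        simp only [mem_Ici] at *; linarith
      have hc2 := HasDerivWithinAt.comp (h := fun s : ℝ => s - t)
        (h₂ := fun h => u h (u t l)) t (by simpa using h0) hinner hmaps
      have hc3 : HasDerivWithinAt (fun s => u (s - t) (u t l)) (F (u t l)) (Ici t) t := by
        simpa [Function.comp_def] using hc2
      refine hc3.congr (fun s hs => ?_) ?_
      · have hs' : t ≤ s := hs
        have := hcomp (s - t) (by linarith) t htpos.le l hl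
        rw [sub_add_cancel] at this
        exact this
      · simp only [sub_self]
        exact (hu0 _ hμ).symm
    -- two-sided differentiability at t via an interior differentiability point
    obtain ⟨t₀, ht₀, hdm⟩ := exists_diffpt (phiC u l)
      (mono_or_anti u hpos hcomp hsign l hl) t htpos
    have hst : 0 < t - t₀ := by linarith [ht₀.2]
    have hpt₀ : 0 < phiC u l t₀ := hpos _ (le_max_right _ _) l hl
    have hkey : (fun h => phiC u l (t + h)) =ᶠ[𝓝 (0:ℝ)]
        (fun h => u (t - t₀) (phiC u l (t₀ + h))) := by
      have hmem : Ioo (-t₀) t₀ ∈ 𝓝 (0:ℝ) := Ioo_mem_nhds (by linarith [ht₀.1]) ht₀.1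
      filter_upwards [hmem] with h hh
      have h1 : (0:ℝ) ≤ t₀ + h := by have := hh.1; linarith
      have h2 : max (t₀ + h) 0 = t₀ + h := max_eq_left h1
      have h3 : max (t + h) 0 = t + h := max_eq_left (by have := hh.1; linarith)
      simp only [phiC, h2, h3]
      rw [show t + h = (t - t₀) + (t₀ + h) by ring,
        hcomp (t - t₀) hst.le (t₀ + h) h1 l hl]
    have hd2 : DifferentiableAt ℝ (fun h => u (t - t₀) (phiC u l (t₀ + h))) 0 := by
      have hin : DifferentiableAt ℝ (fun h : ℝ => t₀ + h) 0 :=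
        (differentiableAt_id.const_add t₀)
      have hdm' : DifferentiableAt ℝ (phiC u l) ((fun h : ℝ => t₀ + h) 0) := by
        simpa using hdm
      have hinner : DifferentiableAt ℝ (fun h : ℝ => phiC u l (t₀ + h)) 0 := hdm'.comp 0 hin
      have houter : DifferentiableAt ℝ (u (t - t₀))
          ((fun h : ℝ => phiC u l (t₀ + h)) 0) := by
        simpa using hdiff (t - t₀) hst.le (phiC u l t₀) hpt₀
      exact houter.comp 0 hinner
    have hd3 : DifferentiableAt ℝ (fun h => phiC u l (t + h)) 0 :=
      hd2.congr_of_eventuallyEq hkey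
    have hd4 : DifferentiableAt ℝ (phiC u l) t := by
      have hin : DifferentiableAt ℝ (fun s : ℝ => s - t) t := differentiableAt_id.sub_const t
      have hcompd := DifferentiableAt.comp (g := fun h => phiC u l (t + h))
        (f := fun s : ℝ => s - t) t (by simpa using hd3) hin
      rwa [show ((fun h => phiC u l (t + h)) ∘ (fun s : ℝ => s - t)) = phiC u l from by
        funext s; simp only [Function.comp]; congr 1; ring] at hcompd
    have hda : HasDerivAt (phiC u l) (deriv (phiC u l) t) t := hd4.hasDerivAt
    have hwithin : HasDerivWithinAt (fun s => u s l) (deriv (phiC u l) t) (Ici t) t := by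
      refine (hda.hasDerivWithinAt).congr (fun s hs => ?_) ?_
      · have hs' : t ≤ s := hs
        simp [phiC, max_eq_left (le_trans htpos.le hs')]
      · simp [phiC, max_eq_left htpos.le]
    have huniq : deriv (phiC u l) t = F (u t l) := by
      have hU : UniqueDiffWithinAt ℝ (Ici t) t := uniqueDiffOn_Ici t t self_mem_Ici
      rw [← hwithin.derivWithin hU]
      exact hshift.derivWithin hU
    have hfinal : HasDerivAt (fun s => u s l) (F (u t l)) t := by
      have hda' : HasDerivAt (phiC u l) (F (u t l)) t := huniq ▸ hda
      refine hda'.congr_of_eventuallyEq ?_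
      filter_upwards [eventually_gt_nhds htpos] with s hs
      simp [phiC, max_eq_left hs.le]
    exact hfinal.hasDerivWithinAt
end
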